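/- arXiv:2407.21779 — 11 statements merged into one kernel-verified Lean document; each statement's English description precedes it below -/
import Mathlib

section
/- For all integers n, r with n > 2r ≥ 0 and all real t, the truncated binomial sum f_{n,2r}(t) = Σ_{i=0}^{2r} C(n,i) t^i is strictly positive. -/
open Finset

lemma sum_pair_aux (a : ℕ → ℝ) (r : ℕ) :
    ∑ i ∈ Finset.range (2*r+1), a i
      = a 0 + ∑ k ∈ Finset.range r, (a (2*k+1) + a (2*k+2)) := by
  induction r with
  | zero => simp
  | succ r ih =>
      rw [show 2*(r+1)+1 = (2*r+1)+1+1 by ring, Finset.sum_range_succ,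
        Finset.sum_range_succ, ih, Finset.sum_range_succ]
      have h1 : 2*r+1+1 = 2*r+2 := by ring
      rw [h1]; ring

theorem truncated_binomial_pos (n r : ℕ) (h : n > 2 * r) (t : ℝ) :
    0 < ∑ i ∈ Finset.range (2 * r + 1), (n.choose i : ℝ) * t ^ i := by
  obtain ⟨m, rfl⟩ : ∃ m, n = m + 1 := ⟨n - 1, by omega⟩
  rcases Nat.eq_zero_or_pos r with hr | hr
  · subst hr; simp
  set f : ℝ → ℝ := fun t => ∑ i ∈ Finset.range (2*r+1), ((m+1).choose i : ℝ) * t ^ i with hf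
  set g : ℝ → ℝ := fun t => ∑ i ∈ Finset.range (2*r), (m.choose i : ℝ) * t ^ i with hg
  show 0 < f t
  -- Claim B : t ≥ 0 → 1 ≤ f t
  have hB : ∀ t : ℝ, 0 ≤ t → 1 ≤ f t := by
    intro t ht
    have : f t = (∑ j ∈ Finset.range (2*r), ((m+1).choose (j+1) : ℝ) * t ^ (j+1)) + 1 := by
      simp [hf, Finset.sum_range_succ']
    rw [this]
    have : 0 ≤ ∑ j ∈ Finset.range (2*r), ((m+1).choose (j+1) : ℝ) * t ^ (j+1) :=
      Finset.sum_nonneg fun j _ => by positivity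
    linarith
  -- Claim A : t ≤ -2r → 1 ≤ f t
  have hA : ∀ t : ℝ, t ≤ -(2*r : ℝ) → 1 ≤ f t := by
    intro t ht
    have ht0 : t ≤ 0 := le_trans ht (neg_nonpos.mpr (by positivity))
    simp only [hf]
    rw [sum_pair_aux]
    have hpair : ∀ k ∈ Finset.range r,
        0 ≤ ((m+1).choose (2*k+1) : ℝ) * t ^ (2*k+1) + ((m+1).choose (2*k+2) : ℝ) * t ^ (2*k+2) := by
      intro k hk
      have hk' : k < r := Finset.mem_range.mp hk
      -- Nat inequality : choose (2k+1) ≤ 2r * choose (2k+2)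
      have hnat : (m+1).choose (2*k+1) ≤ 2*r * ((m+1).choose (2*k+2)) := by
        have h1 : (m+1).choose (2*k+1+1) * (2*k+1+1) = (m+1).choose (2*k+1) * ((m+1) - (2*k+1)) :=
          Nat.choose_succ_right_eq (m+1) (2*k+1)
        have h2 : 1 ≤ (m+1) - (2*k+1) := by omega
        have h3 : (m+1).choose (2*k+1) ≤ (m+1).choose (2*k+1) * ((m+1) - (2*k+1)) :=
          Nat.le_mul_of_pos_right _ h2
        have h4 : 2*k+1+1 ≤ 2*r := by omega
        calc (m+1).choose (2*k+1) ≤ (m+1).choose (2*k+1+1) * (2*k+1+1) := by omega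
          _ ≤ (m+1).choose (2*k+2) * (2*r) := by
              have : (2:ℕ)*k+1+1 = 2*k+2 := by ring
              rw [this]; exact Nat.mul_le_mul_left _ (by omega)
          _ = 2*r * ((m+1).choose (2*k+2)) := Nat.mul_comm _ _
      have hbr : ((m+1).choose (2*k+1) : ℝ) + ((m+1).choose (2*k+2) : ℝ) * t ≤ 0 := by
        have hcast : ((m+1).choose (2*k+1) : ℝ) ≤ (2*r : ℝ) * ((m+1).choose (2*k+2) : ℝ) := by
          exact_mod_cast hnat
        nlinarith [Nat.cast_nonneg (α := ℝ) ((m+1).choose (2*k+2))]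
      have hop : t ^ (2*k+1) ≤ 0 := Odd.pow_nonpos ⟨k, by ring⟩ ht0
      have : ((m+1).choose (2*k+1) : ℝ) * t ^ (2*k+1) + ((m+1).choose (2*k+2) : ℝ) * t ^ (2*k+2)
          = t ^ (2*k+1) * (((m+1).choose (2*k+1) : ℝ) + ((m+1).choose (2*k+2) : ℝ) * t) := by
        ring
      rw [this]
      nlinarith [mul_nonneg (neg_nonneg.mpr hop) (neg_nonneg.mpr hbr)]
    have := Finset.sum_nonneg hpair
    simp only [Nat.choose_zero_right, Nat.cast_one, pow_zero, one_mul]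
    linarith
  -- derivative of f
  have hder : ∀ t : ℝ, HasDerivAt f (((m:ℝ)+1) * g t) t := by
    intro t
    have H : HasDerivAt f (∑ i ∈ Finset.range (2*r+1), ((m+1).choose i : ℝ) * ((i:ℝ) * t ^ (i-1))) t :=
      HasDerivAt.fun_sum fun i _ => (hasDerivAt_pow i t).const_mul _
    convert H using 1
    rw [Finset.sum_range_succ']
    simp only [Nat.cast_zero, zero_mul, mul_zero, add_zero]
    rw [hg, Finset.mul_sum]
    refine Finset.sum_congr rfl fun j _ => ?_
    have hnat : (m+1) * m.choose j = (m+1).choose (j+1) * (j+1) := Nat.add_one_mul_choose_eq m j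
    have hcast : ((m:ℝ)+1) * (m.choose j : ℝ) = ((m+1).choose (j+1) : ℝ) * ((j:ℝ)+1) := by
      exact_mod_cast hnat
    have : (j + 1 : ℕ) - 1 = j := rfl
    rw [this]
    push_cast
    linear_combination (t^j) * hcast
  -- Pascal identity
  have hfg : ∀ t : ℝ, f t = (1 + t) * g t + (m.choose (2*r) : ℝ) * t ^ (2*r) := by
    intro t
    simp only [hf]
    rw [Finset.sum_range_succ']
    have hsplit : ∀ j, ((m+1).choose (j+1) : ℝ) = (m.choose j : ℝ) + (m.choose (j+1) : ℝ) := by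
      intro j
      rw [Nat.choose_succ_succ]
      push_cast; ring
    have : (∑ j ∈ Finset.range (2*r), ((m+1).choose (j+1) : ℝ) * t ^ (j+1))
        = (∑ j ∈ Finset.range (2*r), (m.choose j : ℝ) * t ^ (j+1))
          + (∑ j ∈ Finset.range (2*r), (m.choose (j+1) : ℝ) * t ^ (j+1)) := by
      rw [← Finset.sum_add_distrib]
      refine Finset.sum_congr rfl fun j _ => ?_
      rw [hsplit]; ring
    rw [this]
    have h1 : (∑ j ∈ Finset.range (2*r), (m.choose j : ℝ) * t ^ (j+1)) = t * g t := by
      rw [hg, Finset.mul_sum]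
      refine Finset.sum_congr rfl fun j _ => ?_
      ring
    have h2 : (∑ j ∈ Finset.range (2*r), (m.choose (j+1) : ℝ) * t ^ (j+1)) + (m.choose 0 : ℝ) * t ^ 0
        = g t + (m.choose (2*r) : ℝ) * t ^ (2*r) := by
      rw [← Finset.sum_range_succ' (fun k => (m.choose k : ℝ) * t ^ k) (2*r), hg, Finset.sum_range_succ]
    simp only [Nat.choose_zero_right, Nat.cast_one, pow_zero, one_mul, mul_one] at h2 ⊢
    rw [h1]
    have := h2
    nlinarith [h2]
  -- extreme value theorem on [-(2r)-1, 1]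
  have hcompact : IsCompact (Set.Icc (-(2*r:ℝ)-1) 1) := isCompact_Icc
  have hmem0 : (0:ℝ) ∈ Set.Icc (-(2*r:ℝ)-1) 1 := by
    have h2r : (0:ℝ) ≤ 2*(r:ℝ) := by positivity
    exact ⟨by linarith, by norm_num⟩
  have hcont : Continuous f := by
    apply continuous_finset_sum
    intro i _
    exact continuous_const.mul (continuous_pow i)
  obtain ⟨t0, ht0mem, hmin⟩ := hcompact.exists_isMinOn ⟨0, hmem0⟩ hcont.continuousOn
  have h2r : (0:ℝ) ≤ 2*(r:ℝ) := by positivity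
  have hmin_pos : 0 < f t0 := by
    by_cases h1 : 1 ≤ f t0
    · linarith
    push_neg at h1
    have hlo : -(2*(r:ℝ))-1 < t0 := by
      rcases eq_or_lt_of_le ht0mem.1 with he | hlt
      · exfalso
        have := hA t0 (by rw [← he]; linarith)
        linarith
      · exact hlt
    have hhi : t0 < 1 := by
      rcases eq_or_lt_of_le ht0mem.2 with he | hlt
      · exfalso
        have := hB t0 (by rw [he]; norm_num)
        linarith
      · exact hlt
    have hloc : IsLocalMin f t0 := hmin.isLocalMin (Icc_mem_nhds hlo hhi)
    have hd0 : deriv f t0 = 0 := hloc.deriv_eq_zero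
    have hmg : ((m:ℝ)+1) * g t0 = 0 := by rw [← (hder t0).deriv]; exact hd0
    have hg0 : g t0 = 0 := by
      rcases mul_eq_zero.mp hmg with hc | hc
      · exfalso; have : (0:ℝ) < (m:ℝ)+1 := by positivity
        linarith
      · exact hc
    have hft0 : f t0 = (m.choose (2*r) : ℝ) * t0 ^ (2*r) := by rw [hfg, hg0]; ring
    have ht0ne : t0 ≠ 0 := by
      intro he
      have := hB t0 (by rw [he])
      linarith
    have hpow : 0 < t0 ^ (2*r) := by
      rw [show t0 ^ (2*r) = (t0^2)^r from by rw [← pow_mul]]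
      exact pow_pos (by positivity) r
    have hch : 0 < (m.choose (2*r) : ℝ) := by
      exact_mod_cast Nat.choose_pos (by omega : 2*r ≤ m)
    rw [hft0]; positivity
  by_cases hts : t ∈ Set.Icc (-(2*(r:ℝ))-1) 1
  · exact lt_of_lt_of_le hmin_pos (hmin hts)
  · simp only [Set.mem_Icc, not_and_or, not_le] at hts
    rcases hts with hlt | hgt
    · have := hA t (by linarith)
      linarith
    · have := hB t (by linarith)
      linarith
end

section
/- For every odd positive integer k, if real polynomials h_1, …, h_r in one variable t satisfy (t^2 - 1)^{2k} = Σ_{i=1}^r h_i(t)^2 identically, then each h_i is a polynomial multiple of (t^2 - 1)^k. -/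
/-!
At a real root `a`, a vanishing sum of squares forces every summand to vanish, so `X - a` divides
each `hᵢ`; cancelling `(X - a)²` and inducting shows that `(X - a)^(2n) ∣ ∑ hᵢ²` gives
`(X - a)^n ∣ hᵢ`. Apply this at `a = 1` and `a = -1`, which give coprime factors of `X² - 1`.
-/

open Polynomial

section SumSq

variable {R : Type*} [CommRing R] [LinearOrder R] [IsStrictOrderedRing R]
  {ι : Type*} [Fintype ι] {a : R}

lemma X_sub_C_dvd_of_dvd_sum_sq {h : ι → R[X]} (hdvd : X - C a ∣ ∑ i, h i ^ 2) (i : ι) :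
    X - C a ∣ h i := by
  have hsum : ∑ j, (h j).eval a ^ 2 = 0 := by
    simpa [eval_finsetSum] using dvd_iff_isRoot.mp hdvd
  have hi := (Finset.sum_eq_zero_iff_of_nonneg fun j _ => sq_nonneg ((h j).eval a)).mp hsum i
    (Finset.mem_univ i)
  exact dvd_iff_isRoot.mpr (pow_eq_zero_iff two_ne_zero |>.mp hi)

lemma X_sub_C_pow_dvd_of_dvd_sum_sq (n : ℕ) {h : ι → R[X]}
    (hdvd : (X - C a) ^ (2 * n) ∣ ∑ i, h i ^ 2) (i : ι) : (X - C a) ^ n ∣ h i := by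
  induction n generalizing h with
  | zero => simp
  | succ n ih =>
    choose g hg using fun j => X_sub_C_dvd_of_dvd_sum_sq
      ((dvd_pow_self _ (by omega)).trans hdvd) j
    have hsum : ∑ j, h j ^ 2 = (X - C a) ^ 2 * ∑ j, g j ^ 2 := by
      simp only [Finset.mul_sum, hg, mul_pow]
    have hg_dvd : (X - C a) ^ (2 * n) ∣ ∑ j, g j ^ 2 := by
      rw [hsum, show 2 * (n + 1) = 2 + 2 * n by ring, pow_add] at hdvd
      exact (mul_dvd_mul_iff_left (pow_ne_zero _ (X_sub_C_ne_zero a))).mp hdvd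
    rw [hg i, pow_succ']
    exact mul_dvd_mul_left _ (ih hg_dvd)

end SumSq

theorem sos_decomposition_of_power_divisible_general (k : ℕ)
    (r : ℕ) (h : Fin r → Polynomial ℝ)
    (heq : ((Polynomial.X ^ 2 - 1 : Polynomial ℝ)) ^ (2 * k) = ∑ i, (h i) ^ 2) :
    ∀ i, ((Polynomial.X ^ 2 - 1 : Polynomial ℝ)) ^ k ∣ h i := by
  intro i
  have hfactor : (X ^ 2 - 1 : ℝ[X]) = (X - C 1) * (X - C (-1)) := by
    simp only [map_one, map_neg, sub_neg_eq_add]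
    ring
  rw [hfactor, mul_pow] at heq ⊢
  have hcop : IsCoprime ((X - C (1 : ℝ)) ^ k) ((X - C (-1)) ^ k) :=
    (isCoprime_X_sub_C_of_isUnit_sub (by norm_num)).pow
  refine hcop.mul_dvd ?_ ?_
  · exact X_sub_C_pow_dvd_of_dvd_sum_sq k (heq ▸ dvd_mul_right _ _) i
  · exact X_sub_C_pow_dvd_of_dvd_sum_sq k (heq ▸ dvd_mul_left _ _) i

theorem sos_decomposition_of_power_divisible (k : ℕ) (hk : Odd k) (hk1 : 1 ≤ k)
    (r : ℕ) (h : Fin r → Polynomial ℝ)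
    (heq : ((Polynomial.X ^ 2 - 1 : Polynomial ℝ)) ^ (2 * k) = ∑ i, (h i) ^ 2) :
    ∀ i, ((Polynomial.X ^ 2 - 1 : Polynomial ℝ)) ^ k ∣ h i :=
  sos_decomposition_of_power_divisible_general k r h heq
end

section
/- The Motzkin polynomial m(x,y) = x^4 y^2 + x^2 y^4 + 1 - 3 x^2 y^2 is not a sum of squares of real polynomials. -/
open MvPolynomial

namespace MotzkinAux

noncomputable def mm (a b : ℕ) : Fin 2 →₀ ℕ :=
  Finsupp.single 0 a + Finsupp.single 1 b

lemma mm_apply0 (a b : ℕ) : mm a b 0 = a := by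
  simp [mm, Finsupp.single_apply]

lemma mm_apply1 (a b : ℕ) : mm a b 1 = b := by
  simp [mm, Finsupp.single_apply]

lemma eq_mm (u : Fin 2 →₀ ℕ) : u = mm (u 0) (u 1) := by
  ext i
  fin_cases i
  · simp [mm_apply0]
  · simp [mm_apply1]

lemma mm_add (a b c d : ℕ) : mm a b + mm c d = mm (a + c) (b + d) := by
  ext i
  fin_cases i
  · simp [mm_apply0]
  · simp [mm_apply1]

lemma mm_inj {a b c d : ℕ} : mm a b = mm c d ↔ a = c ∧ b = d := by
  constructor
  · intro h
    constructor
    · rw [← mm_apply0 a b, h, mm_apply0]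
    · rw [← mm_apply1 a b, h, mm_apply1]
  · rintro ⟨rfl, rfl⟩; rfl

lemma sumsup (u : Fin 2 →₀ ℕ) : ∑ i ∈ u.support, u i = u 0 + u 1 := by
  rw [Finset.sum_subset (Finset.subset_univ u.support)
    (fun x _ hx => Finsupp.notMem_support_iff.mp hx), Fin.sum_univ_two]

lemma degree2 (u : Fin 2 →₀ ℕ) : Finsupp.degree u = u 0 + u 1 := sumsup u

lemma coeff_zero_of (f : MvPolynomial (Fin 2) ℝ) (u : Fin 2 →₀ ℕ)
    (h : f.totalDegree < u 0 + u 1) : coeff u f = 0 :=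
  coeff_eq_zero_of_totalDegree_lt (by rw [sumsup]; exact h)

lemma sos_zero {r : ℕ} {f : Fin r → MvPolynomial (Fin 2) ℝ}
    (h : ∑ i, f i ^ 2 = 0) (i : Fin r) : f i = 0 := by
  apply MvPolynomial.funext
  intro x
  have hx : ∑ j, (eval x (f j)) ^ 2 = 0 := by
    have := congrArg (eval x) h
    simpa using this
  have h1 := (Finset.sum_eq_zero_iff_of_nonneg
    (fun j _ => sq_nonneg (eval x (f j)))).mp hx i (Finset.mem_univ i)
  have h2 : eval x (f i) = 0 := by
    nlinarith [sq_nonneg (eval x (f i))]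
  simpa using h2

lemma sos_deg {r : ℕ} {f : Fin r → MvPolynomial (Fin 2) ℝ} {p : MvPolynomial (Fin 2) ℝ}
    (hp : ∑ i, f i ^ 2 = p) (i : Fin r) : 2 * (f i).totalDegree ≤ p.totalDegree := by
  set d := Finset.univ.sup (fun j : Fin r => (f j).totalDegree) with hd
  have hfd : ∀ j, (f j).totalDegree ≤ d := by
    intro j; rw [hd]
    exact Finset.le_sup (f := fun j : Fin r => (f j).totalDegree) (Finset.mem_univ j)
  suffices h2 : 2 * d ≤ p.totalDegree by
    have := hfd i; omega
  rcases Nat.eq_zero_or_pos d with hd0 | hd0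
  · simp [hd0]
  have hne : (Finset.univ : Finset (Fin r)).Nonempty := by
    rcases Finset.univ.eq_empty_or_nonempty (α := Fin r) with he | hne
    · exfalso
      have : d = 0 := by rw [hd, he, Finset.sup_empty]; rfl
      omega
    · exact hne
  obtain ⟨i0, -, hi0⟩ := Finset.exists_mem_eq_sup Finset.univ hne
    (fun j : Fin r => (f j).totalDegree)
  rw [← hd] at hi0
  have hfi0 : f i0 ≠ 0 := by
    intro h0
    rw [h0, totalDegree_zero] at hi0
    omega
  set H : Fin r → MvPolynomial (Fin 2) ℝ := fun j => homogeneousComponent d (f j) with hH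
  have hQhom : (∑ j, H j ^ 2).IsHomogeneous (2 * d) := by
    apply IsHomogeneous.sum
    intro j _
    have := (homogeneousComponent_isHomogeneous d (f j)).pow 2
    rwa [mul_comm] at this
  have hHi0 : H i0 ≠ 0 := by
    have hsupp : (f i0).support.Nonempty := by
      rw [Finset.nonempty_iff_ne_empty, Ne, MvPolynomial.support_eq_empty]
      exact hfi0
    obtain ⟨u, hu, hud⟩ := Finset.exists_mem_eq_sup (f i0).support hsupp
      (fun s : Fin 2 →₀ ℕ => s.sum fun _ e => e)
    have hud' : (f i0).totalDegree = u.sum fun _ e => e := hud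
    intro h0
    have hc : coeff u (H i0) = coeff u (f i0) := by
      rw [hH]
      simp only [coeff_homogeneousComponent]
      rw [if_pos]
      show Finsupp.degree u = d
      have : Finsupp.degree u = u.sum fun _ e => e := rfl
      rw [this, ← hud', ← hi0]
    rw [h0, coeff_zero] at hc
    exact (MvPolynomial.mem_support_iff.mp hu) hc.symm
  have hQ0 : (∑ j, H j ^ 2) ≠ 0 := fun hz => hHi0 (sos_zero hz i0)
  obtain ⟨u, hu⟩ := MvPolynomial.ne_zero_iff.mp hQ0
  have hud : Finsupp.degree u = 2 * d := by
    by_contra hnd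
    exact hu (hQhom.coeff_eq_zero hnd)
  have hcoeff : coeff u p = coeff u (∑ j, H j ^ 2) := by
    rw [← hp, coeff_sum, coeff_sum]
    refine Finset.sum_congr rfl fun j _ => ?_
    rw [sq, sq, coeff_mul, coeff_mul]
    refine Finset.sum_congr rfl fun x hx => ?_
    have hxs : x.1 + x.2 = u := Finset.HasAntidiagonal.mem_antidiagonal.mp hx
    have h0 := DFunLike.congr_fun hxs (0 : Fin 2)
    have h1 := DFunLike.congr_fun hxs (1 : Fin 2)
    simp only [Finsupp.add_apply] at h0 h1
    have hsum : (x.1 0 + x.1 1) + (x.2 0 + x.2 1) = 2 * d := by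
      rw [degree2] at hud
      omega
    rcases lt_or_ge d (x.1 0 + x.1 1) with hgt | hle1
    · rw [coeff_zero_of (f j) x.1 (lt_of_le_of_lt (hfd j) hgt), zero_mul, hH]
      simp only [coeff_homogeneousComponent]
      rw [if_neg (show ¬(Finsupp.degree x.1 = d) by rw [degree2]; omega)]; ring
    · rcases lt_or_ge d (x.2 0 + x.2 1) with hgt2 | hle2
      · rw [coeff_zero_of (f j) x.2 (lt_of_le_of_lt (hfd j) hgt2), mul_zero, hH]
        simp only [coeff_homogeneousComponent]
        rw [if_neg (show ¬(Finsupp.degree x.2 = d) by rw [degree2]; omega)]; ring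
      · rw [hH]
        simp only [coeff_homogeneousComponent]
        rw [if_pos (by rw [degree2]; omega), if_pos (by rw [degree2]; omega)]
  have hmem : u ∈ p.support := MvPolynomial.mem_support_iff.mpr (by rw [hcoeff]; exact hu)
  have hle := MvPolynomial.le_totalDegree hmem
  calc 2 * d = Finsupp.degree u := hud.symm
    _ = u.sum fun _ e => e := rfl
    _ ≤ p.totalDegree := hle

lemma coeff_sq_eq (f : MvPolynomial (Fin 2) ℝ) {s t a b : ℕ}
    (hs : a + a = s) (ht : b + b = t)
    (hz : ∀ p q : Fin 2 →₀ ℕ, p + q = mm s t → p ≠ mm a b →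
      coeff p f * coeff q f = 0) :
    coeff (mm s t) (f ^ 2) = (coeff (mm a b) f) ^ 2 := by
  rw [sq, coeff_mul]
  rw [Finset.sum_eq_single ((mm a b, mm a b) : (Fin 2 →₀ ℕ) × (Fin 2 →₀ ℕ))]
  · rw [sq]
  · rintro ⟨p, q⟩ hmem hne
    have hpq : p + q = mm s t := Finset.HasAntidiagonal.mem_antidiagonal.mp hmem
    by_cases hp : p = mm a b
    · exfalso
      apply hne
      subst hp
      have hq : q = mm a b := by
        have h0 := DFunLike.congr_fun hpq (0 : Fin 2)
        have h1 := DFunLike.congr_fun hpq (1 : Fin 2)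
        simp only [Finsupp.add_apply, mm_apply0, mm_apply1] at h0 h1
        rw [eq_mm q]
        rw [mm_inj]
        omega
      rw [hq]
    · exact hz p q hpq hp
  · intro habs
    exfalso
    apply habs
    rw [Finset.HasAntidiagonal.mem_antidiagonal, mm_add, mm_inj]
    omega

lemma mkey : (X 0 ^ 4 * X 1 ^ 2 + X 0 ^ 2 * X 1 ^ 4 + 1 - 3 * X 0 ^ 2 * X 1 ^ 2
      : MvPolynomial (Fin 2) ℝ)
    = monomial (mm 4 2) 1 + monomial (mm 2 4) 1 + monomial (mm 0 0) 1
      - monomial (mm 2 2) 3 := by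
  have h1 : (1 : MvPolynomial (Fin 2) ℝ) = monomial (mm 0 0) 1 := by
    have : mm 0 0 = 0 := by simp [mm]
    rw [this, monomial_zero', C_1]
  have h3 : (3 : MvPolynomial (Fin 2) ℝ) = C 3 := (map_ofNat C 3).symm
  rw [h3, X_pow_eq_monomial, X_pow_eq_monomial, X_pow_eq_monomial, X_pow_eq_monomial,
    monomial_mul, monomial_mul, mul_assoc, monomial_mul, C_mul_monomial, ← h1]
  norm_num [mm]

end MotzkinAux

open MotzkinAux

theorem motzkin_not_sos :
    ¬ ∃ (r : ℕ) (h : Fin r → MvPolynomial (Fin 2) ℝ),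
      (X 0 ^ 4 * X 1 ^ 2 + X 0 ^ 2 * X 1 ^ 4 + 1 - 3 * X 0 ^ 2 * X 1 ^ 2
        : MvPolynomial (Fin 2) ℝ) = ∑ i, (h i) ^ 2 := by
  rintro ⟨r, h, hEq⟩
  set M : MvPolynomial (Fin 2) ℝ :=
    X 0 ^ 4 * X 1 ^ 2 + X 0 ^ 2 * X 1 ^ 4 + 1 - 3 * X 0 ^ 2 * X 1 ^ 2 with hM
  have hEq' : ∑ i, h i ^ 2 = M := hEq.symm
  -- total degree of M is at most 6
  have hdegmm : ∀ a b : ℕ, ((mm a b).sum fun _ e => e) = a + b := by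
    intro a b
    have : ((mm a b).sum fun _ e => e) = (mm a b) 0 + (mm a b) 1 := sumsup _
    rw [this, mm_apply0, mm_apply1]
  have hM6 : M.totalDegree ≤ 6 := by
    rw [hM, mkey]
    refine le_trans (totalDegree_sub _ _) (max_le (le_trans (totalDegree_add _ _)
      (max_le (le_trans (totalDegree_add _ _) (max_le ?_ ?_)) ?_)) ?_)
    · rw [totalDegree_monomial _ (one_ne_zero), hdegmm]
    · rw [totalDegree_monomial _ (one_ne_zero), hdegmm]
    · rw [totalDegree_monomial _ (one_ne_zero), hdegmm]; omega
    · rw [totalDegree_monomial _ (three_ne_zero), hdegmm]; omega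
  have hdeg : ∀ i, (h i).totalDegree ≤ 3 := by
    intro i
    have := sos_deg hEq' i
    omega
  -- coefficient facts about M
  have c60 : coeff (mm 6 0) M = 0 := by
    rw [hM, mkey]
    simp [coeff_monomial, mm_inj]
  have c06 : coeff (mm 0 6) M = 0 := by
    rw [hM, mkey]
    simp [coeff_monomial, mm_inj]
  have c40 : coeff (mm 4 0) M = 0 := by
    rw [hM, mkey]
    simp [coeff_monomial, mm_inj]
  have c04 : coeff (mm 0 4) M = 0 := by
    rw [hM, mkey]
    simp [coeff_monomial, mm_inj]
  have c20 : coeff (mm 2 0) M = 0 := by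
    rw [hM, mkey]
    simp [coeff_monomial, mm_inj]
  have c02 : coeff (mm 0 2) M = 0 := by
    rw [hM, mkey]
    simp [coeff_monomial, mm_inj]
  have c22 : coeff (mm 2 2) M = -3 := by
    rw [hM, mkey]
    simp [coeff_monomial, mm_inj]
  -- generic extraction of "sum of squares of a single coefficient equals coeff of M"
  have extract : ∀ (s t a b : ℕ), a + a = s → b + b = t →
      (∀ j, ∀ p q : Fin 2 →₀ ℕ, p + q = mm s t → p ≠ mm a b →
        coeff p (h j) * coeff q (h j) = 0) →
      ∑ j, (coeff (mm a b) (h j)) ^ 2 = coeff (mm s t) M := by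
    intro s t a b hs ht hz
    rw [← hEq', coeff_sum]
    exact Finset.sum_congr rfl fun j _ => (coeff_sq_eq (h j) hs ht (hz j)).symm
  -- helper to derive each coefficient is zero from sum of squares = 0
  have allzero : ∀ (a b : ℕ), ∑ j, (coeff (mm a b) (h j)) ^ 2 = 0 →
      ∀ j, coeff (mm a b) (h j) = 0 := by
    intro a b hsum j
    have := (Finset.sum_eq_zero_iff_of_nonneg
      (fun j _ => sq_nonneg (coeff (mm a b) (h j)))).mp hsum j (Finset.mem_univ j)
    nlinarith [sq_nonneg (coeff (mm a b) (h j))]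
  -- Step 1: coefficient of x^3 vanishes
  have h30 : ∀ j, coeff (mm 3 0) (h j) = 0 := by
    apply allzero
    rw [extract 6 0 3 0 rfl rfl ?_, c60]
    intro j p q hpq hp
    have h0 := DFunLike.congr_fun hpq (0 : Fin 2)
    have h1 := DFunLike.congr_fun hpq (1 : Fin 2)
    simp only [Finsupp.add_apply, mm_apply0, mm_apply1] at h0 h1
    rcases lt_or_ge 3 (p 0 + p 1) with hgt | hle
    · rw [coeff_zero_of (h j) p (lt_of_le_of_lt (hdeg j) hgt), zero_mul]
    · have hq : 3 < q 0 + q 1 := by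
        rcases Nat.lt_or_ge (p 0 + p 1) 3 with hlt | hge
        · omega
        · exfalso; apply hp; rw [eq_mm p, mm_inj]; omega
      rw [coeff_zero_of (h j) q (lt_of_le_of_lt (hdeg j) hq), mul_zero]
  have h03 : ∀ j, coeff (mm 0 3) (h j) = 0 := by
    apply allzero
    rw [extract 0 6 0 3 rfl rfl ?_, c06]
    intro j p q hpq hp
    have h0 := DFunLike.congr_fun hpq (0 : Fin 2)
    have h1 := DFunLike.congr_fun hpq (1 : Fin 2)
    simp only [Finsupp.add_apply, mm_apply0, mm_apply1] at h0 h1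
    rcases lt_or_ge 3 (p 0 + p 1) with hgt | hle
    · rw [coeff_zero_of (h j) p (lt_of_le_of_lt (hdeg j) hgt), zero_mul]
    · have hq : 3 < q 0 + q 1 := by
        rcases Nat.lt_or_ge (p 0 + p 1) 3 with hlt | hge
        · omega
        · exfalso; apply hp; rw [eq_mm p, mm_inj]; omega
      rw [coeff_zero_of (h j) q (lt_of_le_of_lt (hdeg j) hq), mul_zero]
  -- Step 2: coefficient of x^2 vanishes
  have h20 : ∀ j, coeff (mm 2 0) (h j) = 0 := by
    apply allzero
    rw [extract 4 0 2 0 rfl rfl ?_, c40]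
    intro j p q hpq hp
    have h0 := DFunLike.congr_fun hpq (0 : Fin 2)
    have h1 := DFunLike.congr_fun hpq (1 : Fin 2)
    simp only [Finsupp.add_apply, mm_apply0, mm_apply1] at h0 h1
    rcases lt_or_ge 3 (p 0 + p 1) with hgt | hle
    · rw [coeff_zero_of (h j) p (lt_of_le_of_lt (hdeg j) hgt), zero_mul]
    · rcases lt_or_ge 3 (q 0 + q 1) with hgt2 | hle2
      · rw [coeff_zero_of (h j) q (lt_of_le_of_lt (hdeg j) hgt2), mul_zero]
      · -- p 1 = q 1 = 0, p 0 + q 0 = 4, p 0 ≤ 3, q 0 ≤ 3, p 0 ≠ 2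
        have hp0 : p 0 ≠ 2 := by
          intro hc; apply hp; rw [eq_mm p, mm_inj]; omega
        rcases Nat.lt_or_ge (p 0) 2 with hlt | hge
        · -- then q 0 = 3, q = mm 3 0
          have : q = mm 3 0 := by rw [eq_mm q, mm_inj]; omega
          rw [this, h30 j, mul_zero]
        · have : p = mm 3 0 := by rw [eq_mm p, mm_inj]; omega
          rw [this, h30 j, zero_mul]
  have h02 : ∀ j, coeff (mm 0 2) (h j) = 0 := by
    apply allzero
    rw [extract 0 4 0 2 rfl rfl ?_, c04]
    intro j p q hpq hp
    have h0 := DFunLike.congr_fun hpq (0 : Fin 2)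
    have h1 := DFunLike.congr_fun hpq (1 : Fin 2)
    simp only [Finsupp.add_apply, mm_apply0, mm_apply1] at h0 h1
    rcases lt_or_ge 3 (p 0 + p 1) with hgt | hle
    · rw [coeff_zero_of (h j) p (lt_of_le_of_lt (hdeg j) hgt), zero_mul]
    · rcases lt_or_ge 3 (q 0 + q 1) with hgt2 | hle2
      · rw [coeff_zero_of (h j) q (lt_of_le_of_lt (hdeg j) hgt2), mul_zero]
      · have hp0 : p 1 ≠ 2 := by
          intro hc; apply hp; rw [eq_mm p, mm_inj]; omega
        rcases Nat.lt_or_ge (p 1) 2 with hlt | hge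
        · have : q = mm 0 3 := by rw [eq_mm q, mm_inj]; omega
          rw [this, h03 j, mul_zero]
        · have : p = mm 0 3 := by rw [eq_mm p, mm_inj]; omega
          rw [this, h03 j, zero_mul]
  -- Step 3: coefficient of x vanishes
  have h10 : ∀ j, coeff (mm 1 0) (h j) = 0 := by
    apply allzero
    rw [extract 2 0 1 0 rfl rfl ?_, c20]
    intro j p q hpq hp
    have h0 := DFunLike.congr_fun hpq (0 : Fin 2)
    have h1 := DFunLike.congr_fun hpq (1 : Fin 2)
    simp only [Finsupp.add_apply, mm_apply0, mm_apply1] at h0 h1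
    have hp0 : p 0 ≠ 1 := by
      intro hc; apply hp; rw [eq_mm p, mm_inj]; omega
    rcases Nat.lt_or_ge (p 0) 1 with hlt | hge
    · have : q = mm 2 0 := by rw [eq_mm q, mm_inj]; omega
      rw [this, h20 j, mul_zero]
    · have : p = mm 2 0 := by rw [eq_mm p, mm_inj]; omega
      rw [this, h20 j, zero_mul]
  have h01 : ∀ j, coeff (mm 0 1) (h j) = 0 := by
    apply allzero
    rw [extract 0 2 0 1 rfl rfl ?_, c02]
    intro j p q hpq hp
    have h0 := DFunLike.congr_fun hpq (0 : Fin 2)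
    have h1 := DFunLike.congr_fun hpq (1 : Fin 2)
    simp only [Finsupp.add_apply, mm_apply0, mm_apply1] at h0 h1
    have hp0 : p 1 ≠ 1 := by
      intro hc; apply hp; rw [eq_mm p, mm_inj]; omega
    rcases Nat.lt_or_ge (p 1) 1 with hlt | hge
    · have : q = mm 0 2 := by rw [eq_mm q, mm_inj]; omega
      rw [this, h02 j, mul_zero]
    · have : p = mm 0 2 := by rw [eq_mm p, mm_inj]; omega
      rw [this, h02 j, zero_mul]
  -- vanishing coefficients collected
  have hvan : ∀ j, ∀ u : Fin 2 →₀ ℕ,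
      (3 < u 0 + u 1 ∨ (u 0 = 1 ∧ u 1 = 0) ∨ (u 0 = 0 ∧ u 1 = 1)
        ∨ (u 0 = 2 ∧ u 1 = 0) ∨ (u 0 = 0 ∧ u 1 = 2)) → coeff u (h j) = 0 := by
    rintro j u (hgt | ⟨ha, hb⟩ | ⟨ha, hb⟩ | ⟨ha, hb⟩ | ⟨ha, hb⟩)
    · exact coeff_zero_of _ _ (lt_of_le_of_lt (hdeg j) hgt)
    · rw [eq_mm u, ha, hb]; exact h10 j
    · rw [eq_mm u, ha, hb]; exact h01 j
    · rw [eq_mm u, ha, hb]; exact h20 j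
    · rw [eq_mm u, ha, hb]; exact h02 j
  -- Final step: coefficient of x^2 y^2
  have hfinal : ∑ j, (coeff (mm 1 1) (h j)) ^ 2 = -3 := by
    rw [extract 2 2 1 1 rfl rfl ?_, c22]
    intro j p q hpq hp
    have h0 := DFunLike.congr_fun hpq (0 : Fin 2)
    have h1 := DFunLike.congr_fun hpq (1 : Fin 2)
    simp only [Finsupp.add_apply, mm_apply0, mm_apply1] at h0 h1
    have hne : ¬ (p 0 = 1 ∧ p 1 = 1) := by
      rintro ⟨ha, hb⟩
      exact hp (by rw [eq_mm p, ha, hb])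
    have key : (3 < p 0 + p 1 ∨ (p 0 = 1 ∧ p 1 = 0) ∨ (p 0 = 0 ∧ p 1 = 1)
        ∨ (p 0 = 2 ∧ p 1 = 0) ∨ (p 0 = 0 ∧ p 1 = 2))
        ∨ (3 < q 0 + q 1 ∨ (q 0 = 1 ∧ q 1 = 0) ∨ (q 0 = 0 ∧ q 1 = 1)
        ∨ (q 0 = 2 ∧ q 1 = 0) ∨ (q 0 = 0 ∧ q 1 = 2)) := by omega
    rcases key with hk | hk
    · rw [hvan j p hk, zero_mul]
    · rw [hvan j q hk, mul_zero]
  have hnn : (0:ℝ) ≤ ∑ j, (coeff (mm 1 1) (h j)) ^ 2 :=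
    Finset.sum_nonneg (fun j _ => sq_nonneg _)
  linarith
end

section
/- If the quaternary quartic polynomial Q = X₄⁴ + X₁²X₂² + X₁²X₃² + X₂²X₃² - 4X₁X₂X₃X₄ satisfies that Q^k is a sum of squares of real polynomials for some odd k ≥ 1, then the k-th power of the Motzkin polynomial m(x,y) = x⁴y² + x²y⁴ + 1 - 3x²y² is also a sum of squares of real polynomials. -/
open MvPolynomial

theorem exists_fin_sum_sq_map {R S : Type*} [CommSemiring R] [CommSemiring S] (φ : R →+* S)
    {p : R} (hp : ∃ (r : ℕ) (H : Fin r → R), p = ∑ i, H i ^ 2) :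
    ∃ (r : ℕ) (h : Fin r → S), φ p = ∑ i, h i ^ 2 := by
  obtain ⟨r, H, rfl⟩ := hp
  exact ⟨r, fun i => φ (H i), by simp only [map_sum, map_pow]⟩

noncomputable def motzkinSubstitution : Fin 4 → MvPolynomial (Fin 2) ℝ := ![X 0, X 1, X 0 * X 1, 1]

theorem aeval_motzkinSubstitution :
    aeval motzkinSubstitution
        (X 3 ^ 4 + X 0 ^ 2 * X 1 ^ 2 + X 0 ^ 2 * X 2 ^ 2 + X 1 ^ 2 * X 2 ^ 2
          - 4 * X 0 * X 1 * X 2 * X 3 : MvPolynomial (Fin 4) ℝ) =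
      (X 0 ^ 4 * X 1 ^ 2 + X 0 ^ 2 * X 1 ^ 4 + 1 - 3 * X 0 ^ 2 * X 1 ^ 2
        : MvPolynomial (Fin 2) ℝ) := by
  simp only [map_sub, map_add, map_mul, map_pow, map_ofNat, aeval_X, motzkinSubstitution,
    Matrix.cons_val]
  ring

theorem Q_sos_implies_motzkin_sos_general (k : ℕ)
    (hQ : ∃ (r : ℕ) (H : Fin r → MvPolynomial (Fin 4) ℝ),
      (X 3 ^ 4 + X 0 ^ 2 * X 1 ^ 2 + X 0 ^ 2 * X 2 ^ 2 + X 1 ^ 2 * X 2 ^ 2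
        - 4 * X 0 * X 1 * X 2 * X 3 : MvPolynomial (Fin 4) ℝ) ^ k = ∑ i, (H i) ^ 2) :
    ∃ (r : ℕ) (h : Fin r → MvPolynomial (Fin 2) ℝ),
      (X 0 ^ 4 * X 1 ^ 2 + X 0 ^ 2 * X 1 ^ 4 + 1 - 3 * X 0 ^ 2 * X 1 ^ 2
        : MvPolynomial (Fin 2) ℝ) ^ k = ∑ i, (h i) ^ 2 := by
  have hsos := exists_fin_sum_sq_map (aeval motzkinSubstitution).toRingHom hQ
  simpa only [AlgHom.toRingHom_eq_coe, RingHom.coe_coe, map_pow, aeval_motzkinSubstitution]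
    using hsos

theorem Q_sos_implies_motzkin_sos (k : ℕ) (hk : Odd k) (hk1 : 1 ≤ k)
    (hQ : ∃ (r : ℕ) (H : Fin r → MvPolynomial (Fin 4) ℝ),
      (X 3 ^ 4 + X 0 ^ 2 * X 1 ^ 2 + X 0 ^ 2 * X 2 ^ 2 + X 1 ^ 2 * X 2 ^ 2
        - 4 * X 0 * X 1 * X 2 * X 3 : MvPolynomial (Fin 4) ℝ) ^ k = ∑ i, (H i) ^ 2) :
    ∃ (r : ℕ) (h : Fin r → MvPolynomial (Fin 2) ℝ),
      (X 0 ^ 4 * X 1 ^ 2 + X 0 ^ 2 * X 1 ^ 4 + 1 - 3 * X 0 ^ 2 * X 1 ^ 2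
        : MvPolynomial (Fin 2) ℝ) ^ k = ∑ i, (h i) ^ 2 :=
  Q_sos_implies_motzkin_sos_general k hQ
end

section
/- The Horn form F = (X₁² + X₂² + X₃² + X₄² + X₅²)² - 4(X₁²X₂² + X₂²X₃² + X₃²X₄² + X₄²X₅² + X₅²X₁²) is nonnegative on ℝ⁵. -/
/-!
The Horn form is invariant under cyclic rotation of the variables, so we may rotate until
`x₁²` is the smallest of the five squares. Then `x₁² ≤ x₂²`, and the identity
`F = (x₁² - x₂² + x₃² - x₄² + x₅²)² + 4 (x₂² - x₁²) x₅² + 4 x₁² x₄²`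
exhibits `F` as a sum of nonnegative terms.
-/

noncomputable def hornForm (x : Fin 5 → ℝ) : ℝ :=
  (∑ i, x i ^ 2) ^ 2 - 4 * ∑ i, x i ^ 2 * x (i + 1) ^ 2

lemma hornForm_comp_add_right (x : Fin 5 → ℝ) (k : Fin 5) :
    hornForm (fun i ↦ x (i + k)) = hornForm x := by
  have hrot (f : Fin 5 → ℝ) : ∑ i, f (i + k) = ∑ i, f i := Equiv.sum_comp (Equiv.addRight k) f
  simp only [hornForm, add_right_comm _ 1 k, hrot (fun i ↦ x i ^ 2),
    hrot (fun i ↦ x i ^ 2 * x (i + 1) ^ 2)]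

lemma hornForm_eq (x : Fin 5 → ℝ) :
    hornForm x = (x 0 ^ 2 - x 1 ^ 2 + x 2 ^ 2 - x 3 ^ 2 + x 4 ^ 2) ^ 2
      + 4 * (x 1 ^ 2 - x 0 ^ 2) * x 4 ^ 2 + 4 * x 0 ^ 2 * x 3 ^ 2 := by
  simp only [hornForm, Fin.sum_univ_five, Fin.isValue, zero_add, Fin.reduceAdd]
  ring

lemma hornForm_nonneg_of_sq_le {x : Fin 5 → ℝ} (h : x 0 ^ 2 ≤ x 1 ^ 2) : 0 ≤ hornForm x := by
  rw [hornForm_eq]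
  have := sub_nonneg.2 h
  positivity

lemma hornForm_nonneg (x : Fin 5 → ℝ) : 0 ≤ hornForm x := by
  obtain ⟨k, hk⟩ := Finite.exists_min fun i ↦ x i ^ 2
  rw [← hornForm_comp_add_right x k]
  exact hornForm_nonneg_of_sq_le (by simpa using hk (1 + k))

theorem horn_nonneg (x1 x2 x3 x4 x5 : ℝ) :
    0 ≤ (x1 ^ 2 + x2 ^ 2 + x3 ^ 2 + x4 ^ 2 + x5 ^ 2) ^ 2
        - 4 * (x1 ^ 2 * x2 ^ 2 + x2 ^ 2 * x3 ^ 2 + x3 ^ 2 * x4 ^ 2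
          + x4 ^ 2 * x5 ^ 2 + x5 ^ 2 * x1 ^ 2) := by
  simpa [hornForm, Fin.sum_univ_five] using hornForm_nonneg ![x1, x2, x3, x4, x5]
end

section
/- For every positive integer k, if real polynomials Q_1, …, Q_r in three variables satisfy (X₁² - X₂² + X₃²)^{2k} = Σ_{i=1}^r Q_i², then each Q_i is a polynomial multiple of (X₁² - X₂² + X₃²)^k. -/
open MvPolynomial

private lemma sos_P_ne_zero : (X 0 ^ 2 - X 1 ^ 2 + X 2 ^ 2 : MvPolynomial (Fin 3) ℝ) ≠ 0 := by
  intro h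
  have := congrArg (MvPolynomial.eval (![1, 0, 0] : Fin 3 → ℝ)) h
  simp at this

/-- If a polynomial vanishes at every real zero of `X₀² - X₁² + X₂²`, then it is divisible by it. -/
private lemma sos_dvd_of_vanish (q : MvPolynomial (Fin 3) ℝ)
    (h : ∀ x : Fin 3 → ℝ, MvPolynomial.eval x (X 0 ^ 2 - X 1 ^ 2 + X 2 ^ 2 : MvPolynomial (Fin 3) ℝ) = 0 →
      MvPolynomial.eval x q = 0) :
    (X 0 ^ 2 - X 1 ^ 2 + X 2 ^ 2 : MvPolynomial (Fin 3) ℝ) ∣ q := by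
  set P : MvPolynomial (Fin 3) ℝ := X 0 ^ 2 - X 1 ^ 2 + X 2 ^ 2 with hP
  set σ : Equiv.Perm (Fin 3) := Equiv.swap 0 1 with hσ
  set e := MvPolynomial.finSuccEquiv ℝ 2 with he
  set q' := e (rename σ q) with hq'
  set w : MvPolynomial (Fin 2) ℝ := X 0 ^ 2 + X 1 ^ 2 with hw
  set m : Polynomial (MvPolynomial (Fin 2) ℝ) := Polynomial.X ^ 2 - Polynomial.C w with hm
  have hmonic : m.Monic := Polynomial.monic_X_pow_sub_C w (by norm_num)
  have hdiv : q' %ₘ m + m * (q' /ₘ m) = q' := Polynomial.modByMonic_add_div q' m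
  set rr := q' %ₘ m with hrr
  have hdegm : m.degree = 2 := Polynomial.degree_X_pow_sub_C (by norm_num) w
  have hdeg : rr.degree < 2 := by
    have := Polynomial.degree_modByMonic_lt q' hmonic
    rwa [hdegm] at this
  have hdeg1 : rr.degree ≤ 1 := by
    by_contra h1
    push_neg at h1
    have h2 := Nat.WithBot.add_one_le_of_lt h1
    norm_num at h2
    exact absurd hdeg (not_lt.mpr h2)
  have hrform : rr = Polynomial.C (rr.coeff 1) * Polynomial.X + Polynomial.C (rr.coeff 0) :=
    Polynomial.eq_X_add_C_of_degree_le_one hdeg1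
  -- key evaluation identity
  have key : ∀ (g : Fin 2 → ℝ) (u : ℝ), u ^ 2 = g 0 ^ 2 + g 1 ^ 2 →
      MvPolynomial.eval g (rr.coeff 0) + MvPolynomial.eval g (rr.coeff 1) * u = 0 := by
    intro g u hu
    have hq0 : MvPolynomial.eval (Fin.cons u g) (rename σ q) = 0 := by
      rw [eval_rename]
      apply h
      have c0 : (Fin.cons u g ∘ σ) 0 = g 0 := by
        simp [hσ, Equiv.swap_apply_left]
      have c1 : (Fin.cons u g ∘ σ) 1 = u := by
        simp [hσ, Equiv.swap_apply_right]
      have c2 : (Fin.cons u g ∘ σ) 2 = g 1 := by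
        have : σ 2 = 2 := Equiv.swap_apply_of_ne_of_ne (by decide) (by decide)
        simp [Function.comp, this]
        rfl
      simp only [hP, map_add, map_sub, map_pow, eval_X, c0, c1, c2]
      linarith [hu]
    have hq1 : Polynomial.eval u (q'.map (MvPolynomial.eval g)) = 0 := by
      rw [hq', he, ← eval_eq_eval_mv_eval']
      exact hq0
    have hdm : Polynomial.eval u (m.map (MvPolynomial.eval g)) = 0 := by
      simp [hm, hw, hu]
    rw [← hdiv] at hq1
    rw [Polynomial.map_add, Polynomial.map_mul, Polynomial.eval_add, Polynomial.eval_mul,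
      hdm, zero_mul, add_zero] at hq1
    rw [hrform] at hq1
    simp only [Polynomial.map_add, Polynomial.map_mul, Polynomial.map_C, Polynomial.map_X,
      Polynomial.eval_add, Polynomial.eval_mul, Polynomial.eval_C, Polynomial.eval_X] at hq1
    linarith [hq1]
  -- from the key identity, both coefficients vanish
  have ha : ∀ g : Fin 2 → ℝ, MvPolynomial.eval g (rr.coeff 0) = 0 := by
    intro g
    have hnn : (0:ℝ) ≤ g 0 ^ 2 + g 1 ^ 2 := by positivity
    have h1 := key g (Real.sqrt (g 0 ^ 2 + g 1 ^ 2)) (Real.sq_sqrt hnn)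
    have h2 := key g (-(Real.sqrt (g 0 ^ 2 + g 1 ^ 2))) (by rw [neg_pow]; simp [Real.sq_sqrt hnn])
    linarith
  have hbw : ∀ g : Fin 2 → ℝ, MvPolynomial.eval g (rr.coeff 1) ^ 2 * (g 0 ^ 2 + g 1 ^ 2) = 0 := by
    intro g
    have hnn : (0:ℝ) ≤ g 0 ^ 2 + g 1 ^ 2 := by positivity
    have h1 := key g (Real.sqrt (g 0 ^ 2 + g 1 ^ 2)) (Real.sq_sqrt hnn)
    rw [ha g, zero_add] at h1
    have := congrArg (· ^ 2) h1
    simp only [mul_pow] at this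
    rw [Real.sq_sqrt hnn] at this
    simpa using this
  have hc0 : rr.coeff 0 = 0 := by
    apply MvPolynomial.funext
    intro x
    simpa using ha x
  have hc1 : rr.coeff 1 = 0 := by
    have hzero : (rr.coeff 1) ^ 2 * w = 0 := by
      apply MvPolynomial.funext
      intro x
      have := hbw x
      simpa [hw] using this
    have hwne : w ≠ 0 := by
      intro hw0
      have := congrArg (MvPolynomial.eval (![1, 0] : Fin 2 → ℝ)) hw0
      simp [hw] at this
    rcases mul_eq_zero.mp hzero with h1 | h1
    · exact pow_eq_zero_iff (by norm_num) |>.mp h1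
    · exact absurd h1 hwne
  have hr0 : rr = 0 := by rw [hrform, hc0, hc1]; simp
  have hmdvd : m ∣ q' := by
    refine ⟨q' /ₘ m, ?_⟩
    conv_lhs => rw [← hdiv]
    rw [hr0, zero_add]
  -- transfer divisibility back
  have hP' : e (rename σ P) = -m := by
    have h1 : rename σ P = (X 1 ^ 2 - X 0 ^ 2 + X 2 ^ 2 : MvPolynomial (Fin 3) ℝ) := by
      have s0 : σ 0 = 1 := Equiv.swap_apply_left 0 1
      have s1 : σ 1 = 0 := Equiv.swap_apply_right 0 1
      have s2 : σ 2 = 2 := Equiv.swap_apply_of_ne_of_ne (by decide) (by decide)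
      simp [hP, map_add, map_sub, map_pow, rename_X, s0, s1, s2]
    rw [h1]
    have e1 : e (X 1 : MvPolynomial (Fin 3) ℝ) = Polynomial.C (X 0) :=
      MvPolynomial.finSuccEquiv_X_succ (j := 0)
    have e2 : e (X 2 : MvPolynomial (Fin 3) ℝ) = Polynomial.C (X 1) :=
      MvPolynomial.finSuccEquiv_X_succ (j := 1)
    have e0 : e (X 0 : MvPolynomial (Fin 3) ℝ) = Polynomial.X :=
      MvPolynomial.finSuccEquiv_X_zero
    rw [map_add, map_sub, map_pow, map_pow, map_pow, e0, e1, e2]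
    rw [hm, hw]
    push_cast [Polynomial.C_add, Polynomial.C_pow]
    ring
  have hdvd' : e (rename σ P) ∣ q' := by
    rw [hP']
    exact (neg_dvd).mpr hmdvd
  have hdvd2 : rename σ P ∣ rename σ q := by
    have := map_dvd e.symm hdvd'
    rwa [AlgEquiv.symm_apply_apply, hq', AlgEquiv.symm_apply_apply] at this
  obtain ⟨c, hc⟩ := hdvd2
  refine ⟨rename σ.symm c, ?_⟩
  have := congrArg (rename (σ.symm : Fin 3 → Fin 3)) hc
  rwa [rename_rename, Equiv.symm_comp_self, rename_id, map_mul, rename_rename,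
    Equiv.symm_comp_self, rename_id] at this

private lemma sos_dvd_each {r : ℕ} (Q : Fin r → MvPolynomial (Fin 3) ℝ)
    (h : (X 0 ^ 2 - X 1 ^ 2 + X 2 ^ 2 : MvPolynomial (Fin 3) ℝ) ∣ ∑ i, Q i ^ 2) (i : Fin r) :
    (X 0 ^ 2 - X 1 ^ 2 + X 2 ^ 2 : MvPolynomial (Fin 3) ℝ) ∣ Q i := by
  apply sos_dvd_of_vanish
  intro x hx
  obtain ⟨c, hc⟩ := h
  have hs : ∑ j, (MvPolynomial.eval x (Q j)) ^ 2 = 0 := by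
    have := congrArg (MvPolynomial.eval x) hc
    rw [map_sum] at this
    simp only [map_pow] at this
    rw [map_mul, hx, zero_mul] at this
    exact this
  have := (Finset.sum_eq_zero_iff_of_nonneg (fun j _ => sq_nonneg (MvPolynomial.eval x (Q j)))).mp
    hs i (Finset.mem_univ i)
  exact pow_eq_zero_iff (by norm_num) |>.mp this

private lemma sos_aux (k : ℕ) : ∀ (r : ℕ) (Q : Fin r → MvPolynomial (Fin 3) ℝ),
    ((X 0 ^ 2 - X 1 ^ 2 + X 2 ^ 2 : MvPolynomial (Fin 3) ℝ)) ^ (2 * (k + 1)) = ∑ i, Q i ^ 2 →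
    ∀ i, ((X 0 ^ 2 - X 1 ^ 2 + X 2 ^ 2 : MvPolynomial (Fin 3) ℝ)) ^ (k + 1) ∣ Q i := by
  set P : MvPolynomial (Fin 3) ℝ := X 0 ^ 2 - X 1 ^ 2 + X 2 ^ 2 with hP
  induction k with
  | zero =>
    intro r Q heq i
    have h1 : P ∣ ∑ j, Q j ^ 2 := by
      rw [← heq]
      exact dvd_pow_self P (by norm_num)
    simpa using sos_dvd_each Q h1 i
  | succ n ih =>
    intro r Q heq i
    have h1 : P ∣ ∑ j, Q j ^ 2 := by
      rw [← heq]
      exact dvd_pow_self P (by norm_num)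
    have h2 := fun j => sos_dvd_each Q h1 j
    choose S hS using h2
    have h3 : P ^ (2 * (n + 1)) = ∑ j, S j ^ 2 := by
      have hcancel : P ^ 2 * P ^ (2 * (n + 1)) = P ^ 2 * ∑ j, S j ^ 2 := by
        rw [← pow_add]
        calc P ^ (2 + 2 * (n + 1)) = P ^ (2 * (n + 1 + 1)) := by ring_nf
          _ = ∑ j, Q j ^ 2 := heq
          _ = ∑ j, (P * S j) ^ 2 := by
              apply Finset.sum_congr rfl
              intro j _
              rw [hS j]
          _ = P ^ 2 * ∑ j, S j ^ 2 := by
              rw [Finset.mul_sum]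
              apply Finset.sum_congr rfl
              intro j _
              ring
      exact mul_left_cancel₀ (pow_ne_zero 2 sos_P_ne_zero) hcancel
    have h4 := ih r S h3 i
    rw [hS i]
    calc P ^ (n + 1 + 1) = P * P ^ (n + 1) := by ring
      _ ∣ P * S i := mul_dvd_mul_left P h4

theorem sos_of_power_cone_divisible (k : ℕ) (hk : 1 ≤ k)
    (r : ℕ) (Q : Fin r → MvPolynomial (Fin 3) ℝ)
    (heq : ((X 0 ^ 2 - X 1 ^ 2 + X 2 ^ 2 : MvPolynomial (Fin 3) ℝ)) ^ (2 * k)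
      = ∑ i, (Q i) ^ 2) :
    ∀ i, ((X 0 ^ 2 - X 1 ^ 2 + X 2 ^ 2 : MvPolynomial (Fin 3) ℝ)) ^ k ∣ Q i := by
  obtain ⟨n, rfl⟩ : ∃ n, k = n + 1 := ⟨k - 1, by omega⟩
  exact sos_aux n r Q heq
end

section
/- The Horn form F = (X₁² + X₂² + X₃² + X₄² + X₅²)² - 4(X₁²X₂² + X₂²X₃² + X₃²X₄² + X₄²X₅² + X₅²X₁²) is not a sum of squares of real polynomials. -/
open MvPolynomial Finset
set_option maxHeartbeats 1000000

/-! Auxiliary lemmas for the proof that the Horn form is not a sum of squares. -/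

private lemma sos_eq_zero {r : ℕ} (p : Fin r → MvPolynomial (Fin 5) ℝ)
    (h : ∑ j, p j ^ 2 = 0) (j : Fin r) : p j = 0 := by
  apply MvPolynomial.funext fun x => ?_
  have hx : ∑ k, (eval x (p k)) ^ 2 = 0 := by
    have := congrArg (eval x) h
    simpa using this
  have h0 := (Finset.sum_eq_zero_iff_of_nonneg (fun k _ => sq_nonneg (eval x (p k)))).mp hx
    j (Finset.mem_univ j)
  simpa [pow_eq_zero_iff] using h0

private lemma deg5 (d : Fin 5 →₀ ℕ) : d.degree = d 0 + d 1 + d 2 + d 3 + d 4 := by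
  have : d.degree = ∑ i : Fin 5, d i :=
    Finset.sum_subset (Finset.subset_univ _) (fun i _ hi => Finsupp.notMem_support_iff.mp hi)
  rw [this, Fin.sum_univ_five]

private lemma deg_single (i : Fin 5) (n : ℕ) : (Finsupp.single i n).degree = n := by
  fin_cases i <;> simp [deg5, Finsupp.single_apply]

private lemma deg_pair {i k : Fin 5} (hik : i ≠ k) (x y : ℕ) :
    (Finsupp.single i x + Finsupp.single k y).degree = x + y := by
  fin_cases i <;> fin_cases k <;>
    simp_all [deg5, Finsupp.single_apply] <;> omega

private lemma fs_ne {a b : Fin 5 →₀ ℕ} (j : Fin 5) (h : a j ≠ b j) : a ≠ b :=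
  fun e => h (by rw [e])

private lemma fs_eq_iff (a b : Fin 5 →₀ ℕ) :
    a = b ↔ (a 0 = b 0 ∧ a 1 = b 1 ∧ a 2 = b 2 ∧ a 3 = b 3 ∧ a 4 = b 4) := by
  constructor
  · rintro rfl; exact ⟨rfl, rfl, rfl, rfl, rfl⟩
  · rintro ⟨h0, h1, h2, h3, h4⟩
    ext j; fin_cases j <;> assumption

private lemma expand_hc (h : MvPolynomial (Fin 5) ℝ) {B : ℕ} (hB : h.totalDegree ≤ B) :
    ∑ i ∈ Finset.range (B + 1), homogeneousComponent i h = h := by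
  conv_rhs => rw [← sum_homogeneousComponent h]
  symm
  apply Finset.sum_subset (Finset.range_subset_range.mpr (by omega))
  intro i _ hi
  exact homogeneousComponent_eq_zero i h (by simp at hi; omega)

private lemma hc_sq (h : MvPolynomial (Fin 5) ℝ) (D B : ℕ) (hB : h.totalDegree ≤ B)
    (hDB : D ≤ B)
    (hz : ∀ i k, i + k = 2 * D → ¬(i = D ∧ k = D) →
      homogeneousComponent i h * homogeneousComponent k h = 0) :
    homogeneousComponent (2 * D) (h ^ 2) = (homogeneousComponent D h) ^ 2 := by
  conv_lhs => rw [sq, ← expand_hc h hB, Finset.sum_mul_sum]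
  rw [map_sum]
  have key : ∀ i k : ℕ, homogeneousComponent (2 * D) (homogeneousComponent i h *
      homogeneousComponent k h) = if 2 * D = i + k then
        homogeneousComponent i h * homogeneousComponent k h else 0 := by
    intro i k
    exact homogeneousComponent_of_mem ((mem_homogeneousSubmodule _ _).mpr
      ((homogeneousComponent_isHomogeneous i h).mul (homogeneousComponent_isHomogeneous k h)))
  rw [Finset.sum_eq_single_of_mem D (Finset.mem_range.mpr (by omega))]
  · rw [map_sum, Finset.sum_eq_single_of_mem D (Finset.mem_range.mpr (by omega))]
    · rw [key, if_pos (by ring), sq]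
    · intro k _ hk
      rw [key, if_neg]
      omega
  · intro i _ hi
    rw [map_sum]
    apply Finset.sum_eq_zero
    intro k _
    rw [key]
    by_cases hik : 2 * D = i + k
    · rw [if_pos hik, hz i k hik.symm (by omega)]
    · rw [if_neg hik]

private lemma classify4 {a b : Fin 5 →₀ ℕ} {i : Fin 5}
    (hab : a + b = Finsupp.single i 4) (hd : a.degree = 2) :
    a = Finsupp.single i 2 ∧ b = Finsupp.single i 2 := by
  have hpt : ∀ j, a j + b j = (Finsupp.single i 4) j := fun j => by
    rw [← hab]; simp
  have hz : ∀ j, j ≠ i → a j = 0 ∧ b j = 0 := by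
    intro j hj
    have h1 := hpt j
    rw [Finsupp.single_apply, if_neg (fun e => hj e.symm)] at h1
    omega
  have ha : a = Finsupp.single i (a i) := by
    ext j
    rcases eq_or_ne j i with rfl | hj
    · simp
    · rw [Finsupp.single_apply, if_neg (fun e => hj e.symm)]; exact (hz j hj).1
  have hb : b = Finsupp.single i (b i) := by
    ext j
    rcases eq_or_ne j i with rfl | hj
    · simp
    · rw [Finsupp.single_apply, if_neg (fun e => hj e.symm)]; exact (hz j hj).2
  rw [ha, deg_single] at hd
  have hbi : b i = 2 := by
    have h2 := hpt i
    simp only [Finsupp.single_eq_same] at h2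
    omega
  rw [hd] at ha
  rw [hbi] at hb
  exact ⟨ha, hb⟩

private lemma classify22 {a b : Fin 5 →₀ ℕ} {i k : Fin 5} (hik : i ≠ k)
    (hab : a + b = Finsupp.single i 2 + Finsupp.single k 2) (hd : a.degree = 2) :
    (a = Finsupp.single i 2 ∧ b = Finsupp.single k 2) ∨
    (a = Finsupp.single k 2 ∧ b = Finsupp.single i 2) ∨
    (a = Finsupp.single i 1 + Finsupp.single k 1 ∧
     b = Finsupp.single i 1 + Finsupp.single k 1) := by
  have hki := hik.symm
  have hpt : ∀ j, a j + b j = (Finsupp.single i 2) j + (Finsupp.single k 2) j := fun j => by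
    rw [← Finsupp.add_apply, hab]; simp
  have hz : ∀ j, j ≠ i → j ≠ k → a j = 0 ∧ b j = 0 := by
    intro j hji hjk
    have h1 := hpt j
    rw [Finsupp.single_apply, if_neg (fun e => hji e.symm),
      Finsupp.single_apply, if_neg (fun e => hjk e.symm)] at h1
    omega
  have hpti : a i + b i = 2 := by
    have h1 := hpt i
    simp [Finsupp.single_apply, hki] at h1
    omega
  have hptk : a k + b k = 2 := by
    have h1 := hpt k
    simp [Finsupp.single_apply, hik] at h1
    omega
  have ha : a = Finsupp.single i (a i) + Finsupp.single k (a k) := by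
    ext j
    rcases eq_or_ne j i with rfl | hji
    · simp [Finsupp.single_apply, hki]
    · rcases eq_or_ne j k with rfl | hjk
      · simp [Finsupp.single_apply, hik]
      · simp [Finsupp.single_apply, (hz j hji hjk).1, Ne.symm hji, Ne.symm hjk]
  have hb : b = Finsupp.single i (b i) + Finsupp.single k (b k) := by
    ext j
    rcases eq_or_ne j i with rfl | hji
    · simp [Finsupp.single_apply, hki]
    · rcases eq_or_ne j k with rfl | hjk
      · simp [Finsupp.single_apply, hik]
      · simp [Finsupp.single_apply, (hz j hji hjk).2, Ne.symm hji, Ne.symm hjk]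
  rw [ha, deg_pair hik] at hd
  have hcase : a i = 0 ∨ a i = 1 ∨ a i = 2 := by omega
  rcases hcase with h0 | h1 | h2
  · have hak : a k = 2 := by omega
    have hbi : b i = 2 := by omega
    have hbk : b k = 0 := by omega
    right; left
    refine ⟨?_, ?_⟩
    · rw [ha, h0, hak]; simp
    · rw [hb, hbi, hbk]; simp
  · have hak : a k = 1 := by omega
    have hbi : b i = 1 := by omega
    have hbk : b k = 1 := by omega
    right; right
    exact ⟨by rw [ha, h1, hak], by rw [hb, hbi, hbk]⟩
  · have hak : a k = 0 := by omega
    have hbi : b i = 0 := by omega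
    have hbk : b k = 2 := by omega
    left
    refine ⟨?_, ?_⟩
    · rw [ha, h2, hak]; simp
    · rw [hb, hbi, hbk]; simp

private lemma coeff_sq4 (h : MvPolynomial (Fin 5) ℝ)
    (hhom : ∀ d : Fin 5 →₀ ℕ, d.degree ≠ 2 → coeff d h = 0) (i : Fin 5) :
    coeff (Finsupp.single i 4) (h ^ 2) = (coeff (Finsupp.single i 2) h) ^ 2 := by
  rw [sq, coeff_mul]
  rw [Finset.sum_eq_single_of_mem (Finsupp.single i 2, Finsupp.single i 2)]
  · exact (sq _).symm
  · rw [Finset.HasAntidiagonal.mem_antidiagonal, ← Finsupp.single_add]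
  · intro p hp hne
    rw [Finset.HasAntidiagonal.mem_antidiagonal] at hp
    by_cases hda : p.1.degree = 2
    · obtain ⟨ha, hb⟩ := classify4 hp hda
      exact absurd (Prod.ext ha hb) hne
    · rw [hhom p.1 hda, zero_mul]

private lemma coeff_sq22 (h : MvPolynomial (Fin 5) ℝ)
    (hhom : ∀ d : Fin 5 →₀ ℕ, d.degree ≠ 2 → coeff d h = 0) {i k : Fin 5} (hik : i ≠ k) :
    coeff (Finsupp.single i 2 + Finsupp.single k 2) (h ^ 2)
      = 2 * (coeff (Finsupp.single i 2) h * coeff (Finsupp.single k 2) h)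
        + (coeff (Finsupp.single i 1 + Finsupp.single k 1) h) ^ 2 := by
  classical
  have hki := hik.symm
  have hv1 : (Finsupp.single i 2 : Fin 5 →₀ ℕ) ≠ Finsupp.single k 2 :=
    fs_ne i (by simp [Finsupp.single_apply, hki])
  have hv2 : (Finsupp.single i 2 : Fin 5 →₀ ℕ) ≠
      Finsupp.single i 1 + Finsupp.single k 1 :=
    fs_ne i (by simp [Finsupp.single_apply, hki])
  have hv3 : (Finsupp.single k 2 : Fin 5 →₀ ℕ) ≠
      Finsupp.single i 1 + Finsupp.single k 1 :=
    fs_ne k (by simp [Finsupp.single_apply, hik])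
  have hsum3 : (Finsupp.single i 1 + Finsupp.single k 1)
      + (Finsupp.single i 1 + Finsupp.single k 1)
      = Finsupp.single i 2 + Finsupp.single k 2 := by
    ext j; simp [Finsupp.single_apply]; split_ifs <;> omega
  have hTsub : ({(Finsupp.single i 2, Finsupp.single k 2),
      (Finsupp.single k 2, Finsupp.single i 2),
      (Finsupp.single i 1 + Finsupp.single k 1, Finsupp.single i 1 + Finsupp.single k 1)} :
      Finset ((Fin 5 →₀ ℕ) × (Fin 5 →₀ ℕ))) ⊆
      Finset.HasAntidiagonal.antidiagonal (Finsupp.single i 2 + Finsupp.single k 2) := by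
    intro p hp
    simp only [Finset.mem_insert, Finset.mem_singleton] at hp
    rcases hp with rfl | rfl | rfl
    · rw [Finset.HasAntidiagonal.mem_antidiagonal]
    · rw [Finset.HasAntidiagonal.mem_antidiagonal]; exact add_comm _ _
    · rw [Finset.HasAntidiagonal.mem_antidiagonal]; exact hsum3
  rw [sq, coeff_mul, ← Finset.sum_subset hTsub ?_]
  · rw [Finset.sum_insert (by simp [Prod.ext_iff, hv1, hv2, hv3]),
      Finset.sum_insert (by simp [Prod.ext_iff, hv1, hv2, hv3]),
      Finset.sum_singleton]
    ring
  · intro p hp hnp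
    rw [Finset.HasAntidiagonal.mem_antidiagonal] at hp
    by_cases hda : p.1.degree = 2
    · rcases classify22 hik hp hda with ⟨ha, hb⟩ | ⟨ha, hb⟩ | ⟨ha, hb⟩ <;>
        exact absurd (by simp [Finset.mem_insert, Prod.ext_iff, ha, hb]) hnp
    · rw [hhom p.1 hda, zero_mul]

private lemma coeff_XX (a b : Fin 5) (γ : Fin 5 →₀ ℕ) :
    coeff γ (X a ^ 2 * X b ^ 2 : MvPolynomial (Fin 5) ℝ)
      = if Finsupp.single a 2 + Finsupp.single b 2 = γ then 1 else 0 := by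
  rw [X_pow_eq_monomial, X_pow_eq_monomial, monomial_mul, coeff_monomial, one_mul]

private lemma coeff_X4 (a : Fin 5) (γ : Fin 5 →₀ ℕ) :
    coeff γ (X a ^ 4 : MvPolynomial (Fin 5) ℝ)
      = if Finsupp.single a 4 = γ then 1 else 0 := by
  rw [X_pow_eq_monomial, coeff_monomial]

private lemma pair_zero {r : ℕ} (d1 d2 b : Fin r → ℝ)
    (h1 : ∑ j, d1 j ^ 2 = 1) (h2 : ∑ j, d2 j ^ 2 = 1)
    (h3 : ∑ j, (2 * (d1 j * d2 j) + (b j) ^ 2) = -2) (j : Fin r) : d1 j + d2 j = 0 := by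
  have hkey : ∑ j, ((d1 j + d2 j) ^ 2 + (b j) ^ 2) = 0 := by
    have he : ∑ j, ((d1 j + d2 j) ^ 2 + (b j) ^ 2)
        = ∑ j, (d1 j ^ 2) + (∑ j, (d2 j ^ 2) + ∑ j, (2 * (d1 j * d2 j) + (b j) ^ 2)) := by
      rw [← Finset.sum_add_distrib, ← Finset.sum_add_distrib]
      apply Finset.sum_congr rfl
      intros; ring
    rw [he, h1, h2, h3]; norm_num
  have := (Finset.sum_eq_zero_iff_of_nonneg (fun k _ => by positivity)).mp hkey j
    (Finset.mem_univ j)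
  nlinarith [sq_nonneg (d1 j + d2 j), sq_nonneg (b j)]

open Finsupp in
theorem horn_not_sos :
    ¬ ∃ (r : ℕ) (H : Fin r → MvPolynomial (Fin 5) ℝ),
      ((X 0 ^ 2 + X 1 ^ 2 + X 2 ^ 2 + X 3 ^ 2 + X 4 ^ 2) ^ 2
        - 4 * (X 0 ^ 2 * X 1 ^ 2 + X 1 ^ 2 * X 2 ^ 2 + X 2 ^ 2 * X 3 ^ 2
          + X 3 ^ 2 * X 4 ^ 2 + X 4 ^ 2 * X 0 ^ 2) : MvPolynomial (Fin 5) ℝ)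
        = ∑ i, (H i) ^ 2 := by
  rintro ⟨r, H, hF⟩
  set F : MvPolynomial (Fin 5) ℝ :=
    ((X 0 ^ 2 + X 1 ^ 2 + X 2 ^ 2 + X 3 ^ 2 + X 4 ^ 2) ^ 2
      - 4 * (X 0 ^ 2 * X 1 ^ 2 + X 1 ^ 2 * X 2 ^ 2 + X 2 ^ 2 * X 3 ^ 2
        + X 3 ^ 2 * X 4 ^ 2 + X 4 ^ 2 * X 0 ^ 2)) with hFdef
  -- homogeneity of F
  have hX2 : ∀ i : Fin 5, ((X i ^ 2 : MvPolynomial (Fin 5) ℝ)).IsHomogeneous 2 :=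
    fun i => isHomogeneous_X_pow i 2
  have hFhom : F.IsHomogeneous 4 := by
    rw [hFdef]
    apply MvPolynomial.IsHomogeneous.sub
    · exact ((((hX2 0).add (hX2 1)).add (hX2 2)).add ((hX2 3))).add (hX2 4) |>.pow 2
    · rw [show (4 : MvPolynomial (Fin 5) ℝ) = C (4:ℝ) from (map_ofNat C 4).symm]
      exact (((((hX2 0).mul (hX2 1)).add ((hX2 1).mul (hX2 2))).add
        ((hX2 2).mul (hX2 3))).add ((hX2 3).mul (hX2 4)) |>.add
        ((hX2 4).mul (hX2 0))).C_mul 4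
  -- homogeneous components of the identity
  have hcomp : ∀ n, homogeneousComponent n F = ∑ j, homogeneousComponent n (H j ^ 2) := by
    intro n; rw [hF, map_sum]
  -- constant coefficients vanish
  have hC0 : ∀ j, constantCoeff (H j) = 0 := by
    have h0 : ∑ j, (constantCoeff (H j)) ^ 2 = 0 := by
      have hc := congrArg constantCoeff hF
      rw [map_sum] at hc
      simp only [map_pow] at hc
      rw [← hc]
      simp [hFdef]
    intro j
    have := (Finset.sum_eq_zero_iff_of_nonneg (fun k _ => sq_nonneg _)).mp h0 j
      (Finset.mem_univ j)
    exact pow_eq_zero_iff (two_ne_zero) |>.mp this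
  have hc0 : ∀ j, homogeneousComponent 0 (H j) = 0 := by
    intro j
    rw [homogeneousComponent_zero,
      show coeff 0 (H j) = constantCoeff (H j) from rfl, hC0 j, map_zero]
  -- degree bound
  set B0 : ℕ := Finset.univ.sup (fun j => (H j).totalDegree) with hB0
  have hBd : ∀ j, (H j).totalDegree ≤ B0 :=
    fun j => Finset.le_sup (f := fun j => (H j).totalDegree) (Finset.mem_univ j)
  -- no components of degree > 2
  have htop : ∀ m, 2 < m → ∀ j, homogeneousComponent m (H j) = 0 := by
    by_contra hcon
    push_neg at hcon
    obtain ⟨m0, hm0, j1, hj1⟩ := hcon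
    set S : Set ℕ := {d | 2 < d ∧ ∃ j, homogeneousComponent d (H j) ≠ 0} with hS
    have hSne : S.Nonempty := ⟨m0, hm0, j1, hj1⟩
    have hSbdd : BddAbove S := by
      refine ⟨B0, ?_⟩
      rintro d ⟨-, j, hj⟩
      by_contra hd
      push_neg at hd
      exact hj (homogeneousComponent_eq_zero _ _ (lt_of_le_of_lt (hBd j) hd))
    have hDS : sSup S ∈ S := Nat.sSup_mem hSne hSbdd
    set D := sSup S with hD
    obtain ⟨hD2, j0, hj0⟩ := hDS
    have hDmax : ∀ m, D < m → ∀ j, homogeneousComponent m (H j) = 0 := by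
      intro m hm j
      by_contra hcc
      have hmem : m ∈ S := ⟨by omega, j, hcc⟩
      exact absurd (le_csSup hSbdd hmem) (by omega)
    have hsq : ∀ j, homogeneousComponent (2 * D) (H j ^ 2)
        = (homogeneousComponent D (H j)) ^ 2 := by
      intro j
      apply hc_sq _ D (max B0 D) (le_trans (hBd j) (le_max_left _ _)) (le_max_right _ _)
      intro i k hik hne
      rcases Nat.lt_or_ge i D with hi | hi
      · rw [hDmax k (by omega) j, mul_zero]
      · rcases Nat.eq_or_lt_of_le hi with he | hlt
        · rw [hDmax k (by omega) j, mul_zero]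
        · rw [hDmax i hlt j, zero_mul]
    have hzF : homogeneousComponent (2 * D) F = 0 := by
      rw [homogeneousComponent_of_mem ((mem_homogeneousSubmodule _ _).mpr hFhom),
        if_neg (by omega)]
    have hsum0 : ∑ j, (homogeneousComponent D (H j)) ^ 2 = 0 := by
      calc ∑ j, (homogeneousComponent D (H j)) ^ 2
          = ∑ j, homogeneousComponent (2 * D) (H j ^ 2) :=
            Finset.sum_congr rfl (fun j _ => (hsq j).symm)
        _ = homogeneousComponent (2 * D) F := (hcomp (2 * D)).symm
        _ = 0 := hzF
    exact hj0 (sos_eq_zero _ hsum0 j0)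
  -- no components of degree 1
  have hc1 : ∀ j, homogeneousComponent 1 (H j) = 0 := by
    have hsq : ∀ j, homogeneousComponent 2 (H j ^ 2)
        = (homogeneousComponent 1 (H j)) ^ 2 := by
      intro j
      have hh := hc_sq (H j) 1 (max B0 1) (le_trans (hBd j) (le_max_left _ _))
        (le_max_right _ _) ?_
      · simpa using hh
      · intro i k hik hne
        have : i = 0 ∨ (i = 2 ∧ k = 0) := by omega
        rcases this with h0 | ⟨h2, hk0⟩
        · rw [h0, hc0 j, zero_mul]
        · rw [hk0, hc0 j, mul_zero]
    have hzF : homogeneousComponent 2 F = 0 := by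
      rw [homogeneousComponent_of_mem ((mem_homogeneousSubmodule _ _).mpr hFhom),
        if_neg (by omega)]
    have hsum0 : ∑ j, (homogeneousComponent 1 (H j)) ^ 2 = 0 := by
      calc ∑ j, (homogeneousComponent 1 (H j)) ^ 2
          = ∑ j, homogeneousComponent 2 (H j ^ 2) :=
            Finset.sum_congr rfl (fun j _ => (hsq j).symm)
        _ = homogeneousComponent 2 F := (hcomp 2).symm
        _ = 0 := hzF
    exact fun j => sos_eq_zero _ hsum0 j
  -- each H j is homogeneous of degree 2 (coefficientwise)
  have hhom : ∀ j (d : Fin 5 →₀ ℕ), d.degree ≠ 2 → coeff d (H j) = 0 := by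
    intro j d hd
    have hcc : coeff d (H j) = coeff d (homogeneousComponent d.degree (H j)) := by
      rw [coeff_homogeneousComponent, if_pos rfl]
    rcases hdd : d.degree with _ | (_ | (_ | m))
    · rw [hcc, hdd, hc0 j, coeff_zero]
    · rw [hcc, hdd, hc1 j, coeff_zero]
    · exact absurd hdd hd
    · rw [hcc, hdd, htop (m + 3) (by omega) j, coeff_zero]
  -- coefficients of the identity
  have hcoeF : ∀ γ, coeff γ F = ∑ j, coeff γ (H j ^ 2) := by
    intro γ; rw [hF, coeff_sum]
  -- expansion of F
  have hexp : F = X 0 ^ 4 + X 1 ^ 4 + X 2 ^ 4 + X 3 ^ 4 + X 4 ^ 4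
        + C (2:ℝ) * (X 0 ^ 2 * X 2 ^ 2) + C (2:ℝ) * (X 0 ^ 2 * X 3 ^ 2)
        + C (2:ℝ) * (X 1 ^ 2 * X 3 ^ 2) + C (2:ℝ) * (X 1 ^ 2 * X 4 ^ 2)
        + C (2:ℝ) * (X 2 ^ 2 * X 4 ^ 2)
        - C (2:ℝ) * (X 0 ^ 2 * X 1 ^ 2) - C (2:ℝ) * (X 1 ^ 2 * X 2 ^ 2)
        - C (2:ℝ) * (X 2 ^ 2 * X 3 ^ 2) - C (2:ℝ) * (X 3 ^ 2 * X 4 ^ 2)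
        - C (2:ℝ) * (X 4 ^ 2 * X 0 ^ 2) := by
    rw [hFdef, show (C (2:ℝ) : MvPolynomial (Fin 5) ℝ) = 2 from map_ofNat C 2]
    ring
  -- the two families of coefficient relations
  have R1 : ∀ i : Fin 5, ∑ j, (coeff (Finsupp.single i 2) (H j)) ^ 2 = 1 := by
    intro i
    have h := (hcoeF (Finsupp.single i 4)).trans
      (Finset.sum_congr rfl (fun j _ => coeff_sq4 (H j) (hhom j) i))
    rw [← h, hexp]
    simp only [coeff_add, coeff_sub, coeff_C_mul, coeff_XX, coeff_X4]
    fin_cases i <;>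
      simp (config := { decide := true }) [fs_eq_iff, Finsupp.single_apply]
  have R2 : ∀ i k : Fin 5, i ≠ k →
      coeff (Finsupp.single i 2 + Finsupp.single k 2) F
      = ∑ j, (2 * (coeff (Finsupp.single i 2) (H j) * coeff (Finsupp.single k 2) (H j))
        + (coeff (Finsupp.single i 1 + Finsupp.single k 1) (H j)) ^ 2) := by
    intro i k hik
    rw [hcoeF]
    exact Finset.sum_congr rfl (fun j _ => coeff_sq22 (H j) (hhom j) hik)
  have hcF22 : ∀ i k : Fin 5, i ≠ k →
      ((i, k) = (0, 1) ∨ (i, k) = (1, 2) ∨ (i, k) = (2, 3) ∨ (i, k) = (3, 4) ∨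
        (i, k) = (4, 0)) →
      coeff (Finsupp.single i 2 + Finsupp.single k 2) F = -2 := by
    intro i k hik hc
    rw [hexp]
    simp only [coeff_add, coeff_sub, coeff_C_mul, coeff_XX, coeff_X4]
    rcases hc with h | h | h | h | h <;>
      (injection h with h1 h2; subst h1; subst h2;
        simp (config := { decide := true }) [fs_eq_iff, Finsupp.single_apply])
  -- adjacency relations
  have hadj : ∀ (i k : Fin 5), i ≠ k →
      ((i, k) = (0, 1) ∨ (i, k) = (1, 2) ∨ (i, k) = (2, 3) ∨ (i, k) = (3, 4) ∨
        (i, k) = (4, 0)) →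
      ∀ j, coeff (Finsupp.single i 2) (H j) + coeff (Finsupp.single k 2) (H j) = 0 := by
    intro i k hik hc j
    apply pair_zero _ _ (fun j => coeff (Finsupp.single i 1 + Finsupp.single k 1) (H j))
      (R1 i) (R1 k)
    rw [← R2 i k hik, hcF22 i k hik hc]
  -- final contradiction
  have hdz : ∀ j, coeff (Finsupp.single (0 : Fin 5) 2) (H j) = 0 := by
    intro j
    have h01 := hadj 0 1 (by decide) (by norm_num) j
    have h12 := hadj 1 2 (by decide) (by norm_num) j
    have h23 := hadj 2 3 (by decide) (by norm_num) j
    have h34 := hadj 3 4 (by decide) (by norm_num) j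
    have h40 := hadj 4 0 (by decide) (by norm_num) j
    linarith
  have hfin := R1 0
  rw [Finset.sum_eq_zero (fun j _ => by rw [hdz j]; ring)] at hfin
  norm_num at hfin
end

section
/- For every odd positive integer k, the k-th power F^k of the Horn form F = (X₁² + X₂² + X₃² + X₄² + X₅²)² - 4(X₁²X₂² + X₂²X₃² + X₃²X₄² + X₄²X₅² + X₅²X₁²) is not a sum of squares of real polynomials. -/
noncomputable section AuxHornSOS
open Polynomial

lemma sos_real {r : ℕ} (a : Fin r → ℝ) (h : ∑ j, (a j)^2 = 0) : ∀ j, a j = 0 := by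
  intro j
  have h1 : ∀ i ∈ Finset.univ, (0:ℝ) ≤ (a i)^2 := fun i _ => sq_nonneg _
  have h2 := (Finset.sum_eq_zero_iff_of_nonneg h1).mp h j (Finset.mem_univ j)
  exact pow_eq_zero_iff (two_ne_zero) |>.mp h2

/-- A sum of squares in A[X] equal to a constant forces all entries constant. -/
lemma sos_eq_C {A : Type} [CommRing A] [IsDomain A]
    (hA : ∀ (r : ℕ) (a : Fin r → A), ∑ j, (a j)^2 = 0 → ∀ j, a j = 0)
    {r : ℕ} (lam : Fin r → Polynomial A) (c : A)
    (h : ∑ j, (lam j)^2 = C c) :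
    ∃ a : Fin r → A, (∀ j, lam j = C (a j)) ∧ ∑ j, (a j)^2 = c := by
  have hdeg : ∀ j, (lam j).natDegree = 0 := by
    by_contra hc
    push_neg at hc
    obtain ⟨j₀, hj₀⟩ := hc
    have hr : (Finset.univ : Finset (Fin r)).Nonempty := ⟨j₀, Finset.mem_univ _⟩
    set d := Finset.univ.sup (fun j => (lam j).natDegree) with hd
    have hled : ∀ j, (lam j).natDegree ≤ d := fun j =>
      Finset.le_sup (f := fun j => (lam j).natDegree) (Finset.mem_univ j)
    have hdpos : 0 < d := lt_of_lt_of_le (Nat.pos_of_ne_zero hj₀) (hled j₀)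
    have hco : ∀ j : Fin r, ((lam j)^2).coeff (2*d) = ((lam j).coeff d)^2 := by
      intro j
      rw [sq, coeff_mul]
      rw [Finset.sum_eq_single (d, d)]
      · rw [sq]
      · rintro ⟨i1, i2⟩ hmem hne
        rw [Finset.HasAntidiagonal.mem_antidiagonal] at hmem
        have : d < i1 ∨ d < i2 := by
          by_contra hcon
          push_neg at hcon
          apply hne
          have : i1 = d ∧ i2 = d := by omega
          simp [this.1, this.2]
        rcases this with h' | h'
        · rw [coeff_eq_zero_of_natDegree_lt (lt_of_le_of_lt (hled j) h'), zero_mul]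
        · rw [coeff_eq_zero_of_natDegree_lt (lt_of_le_of_lt (hled j) h'), mul_zero]
      · intro hnot
        exact absurd (by rw [Finset.HasAntidiagonal.mem_antidiagonal]; omega) hnot
    have hzero : ∑ j, ((lam j).coeff d)^2 = 0 := by
      have h2 := congrArg (fun p => Polynomial.coeff p (2*d)) h
      simp only [finset_sum_coeff] at h2
      rw [coeff_C, if_neg (by omega)] at h2
      rw [← h2]
      exact Finset.sum_congr rfl fun j _ => (hco j).symm
    have hall := hA r _ hzero
    obtain ⟨j₁, _, hj₁⟩ := Finset.exists_mem_eq_sup Finset.univ hr (fun j => (lam j).natDegree)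
    rw [← hd] at hj₁
    have hne : lam j₁ ≠ 0 := by
      intro h0
      rw [h0, natDegree_zero] at hj₁
      omega
    have : (lam j₁).coeff d ≠ 0 := by
      rw [hj₁]
      show (lam j₁).leadingCoeff ≠ 0
      exact leadingCoeff_ne_zero.mpr hne
    exact this (hall j₁)
  refine ⟨fun j => (lam j).coeff 0, fun j => eq_C_of_natDegree_eq_zero (hdeg j), ?_⟩
  have : ∑ j, (lam j)^2 = C (∑ j, ((lam j).coeff 0)^2) := by
    rw [map_sum]
    exact Finset.sum_congr rfl fun j _ => by
      rw [eq_C_of_natDegree_eq_zero (hdeg j)]; rw [← map_pow]; simp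
  rw [this] at h
  exact C_injective h

lemma sos_zero {A : Type} [CommRing A] [IsDomain A]
    (hA : ∀ (r : ℕ) (a : Fin r → A), ∑ j, (a j)^2 = 0 → ∀ j, a j = 0)
    {r : ℕ} (lam : Fin r → Polynomial A) (h : ∑ j, (lam j)^2 = 0) : ∀ j, lam j = 0 := by
  obtain ⟨a, ha, hs⟩ := sos_eq_C hA lam 0 (by simpa using h)
  intro j
  rw [ha j, hA r a hs j, map_zero]

lemma sos_dvd_pow {A : Type} [CommRing A] [IsDomain A]
    (hA : ∀ (r : ℕ) (a : Fin r → A), ∑ j, (a j)^2 = 0 → ∀ j, a j = 0)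
    {r : ℕ} (k : ℕ) :
    ∀ (q : Fin r → Polynomial A) (g : Polynomial A),
      (∑ j, (q j)^2 = X^(2*k) * g) →
      ∃ q' : Fin r → Polynomial A, (∀ j, q j = X^k * q' j) ∧ ∑ j, (q' j)^2 = g := by
  induction k with
  | zero => exact fun q g h => ⟨q, fun j => by simp, by simpa using h⟩
  | succ k ih =>
    intro q g h
    have hev : ∑ j, ((q j).eval 0)^2 = 0 := by
      have h2 := congrArg (Polynomial.eval 0) h
      simp only [eval_finset_sum, eval_mul, eval_pow, eval_X] at h2
      rw [zero_pow (by omega), zero_mul] at h2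
      exact h2
    have hdvd : ∀ j, X ∣ q j := by
      intro j
      rw [X_dvd_iff, coeff_zero_eq_eval_zero]
      exact hA r _ hev j
    choose q1 hq1 using hdvd
    have h2 : X^2 * ∑ j, (q1 j)^2 = X^2 * (X^(2*k) * g) := by
      rw [Finset.mul_sum]
      have : ∀ j : Fin r, X^2 * (q1 j)^2 = (q j)^2 := fun j => by rw [hq1 j]; ring
      rw [Finset.sum_congr rfl fun j _ => this j, h]
      ring
    have h3 := mul_left_cancel₀ (pow_ne_zero 2 (X_ne_zero (R := A))) h2
    obtain ⟨q', hq', hsum⟩ := ih q1 g h3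
    exact ⟨q', fun j => by rw [hq1 j, hq' j]; ring, hsum⟩


abbrev RXY := Polynomial (Polynomial ℝ)

def finner : Polynomial ℝ →+* RXY :=
  eval₂RingHom (Polynomial.C.comp Polynomial.C) Polynomial.X

def tau : RXY →+* RXY := eval₂RingHom finner (Polynomial.C Polynomial.X)

@[simp] lemma finner_C (c : ℝ) : finner (C c) = C (C c) := by
  simp [finner]

@[simp] lemma finner_X : finner X = X := by
  simp [finner]

@[simp] lemma tau_C (p : Polynomial ℝ) : tau (C p) = finner p := by
  simp [tau]

@[simp] lemma tau_X : tau X = C X := by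
  simp [tau]

lemma tau_tau (p : RXY) : tau (tau p) = p := by
  have : tau.comp tau = RingHom.id RXY := by
    apply Polynomial.ringHom_ext
    · intro a
      have : (tau.comp tau).comp (Polynomial.C : Polynomial ℝ →+* RXY)
          = (Polynomial.C : Polynomial ℝ →+* RXY) := by
        apply Polynomial.ringHom_ext
        · intro c
          simp
        · simp
      exact RingHom.congr_fun this a
    · simp
  exact RingHom.congr_fun this p

def chi (a b : ℝ) : RXY →ₐ[ℝ] ℝ :=
  (Polynomial.aeval b).comp (Polynomial.mapAlgHom (Polynomial.aeval a))

@[simp] lemma chi_C (a b : ℝ) (p : Polynomial ℝ) : chi a b (C p) = p.eval a := by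
  simp [chi, Polynomial.aeval_def, eval₂_at_apply]

@[simp] lemma chi_X (a b : ℝ) : chi a b (X : RXY) = b := by
  simp [chi]

lemma pow16 (k : ℕ) : ((16 : RXY) * (Polynomial.C Polynomial.X)^2 * Polynomial.X^2)^k
    = Polynomial.X^(2*k) * Polynomial.C ((16:Polynomial ℝ)^k * Polynomial.X^(2*k)) := by
  rw [map_mul, map_pow, map_pow]
  have h16 : (Polynomial.C (16:Polynomial ℝ) : RXY) = 16 := by rw [map_ofNat]
  rw [h16]; ring



noncomputable def gf (a b : Fin 5) : Fin 5 → RXY := fun l =>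
  if l = a then Polynomial.C Polynomial.X + Polynomial.X
  else if l = b then Polynomial.X - Polynomial.C Polynomial.X else 0
noncomputable def pt (c : Fin 5) : Fin 5 → ℝ := fun l => if l = c then 1 else 0
lemma gf_a (a b : Fin 5) : gf a b a = Polynomial.C Polynomial.X + Polynomial.X := by simp [gf]
lemma gf_b (a b : Fin 5) (h : a ≠ b) : gf a b b = Polynomial.X - Polynomial.C Polynomial.X := by
  simp [gf, (h.symm : b ≠ a)]
lemma gf_other (a b l : Fin 5) (h1 : l ≠ a) (h2 : l ≠ b) : gf a b l = 0 := by simp [gf, h1, h2]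
lemma pt_self (c : Fin 5) : pt c c = 1 := by simp [pt]
lemma pt_other (c l : Fin 5) (h : l ≠ c) : pt c l = 0 := by simp [pt, h]

lemma edge_step {r k : ℕ} (hk : Odd k) (H : Fin r → MvPolynomial (Fin 5) ℝ)
    (a b : Fin 5) (hab : a ≠ b)
    (hsub : ∑ j, ((MvPolynomial.aeval (gf a b)) (H j))^2
        = ((16 : RXY) * (Polynomial.C Polynomial.X)^2 * Polynomial.X^2)^k) :
    ∀ j, (MvPolynomial.aeval (pt b)) (H j) = - (MvPolynomial.aeval (pt a)) (H j) := by
  have hA0 : ∀ (r : ℕ) (a : Fin r → ℝ), ∑ j, (a j)^2 = 0 → ∀ j, a j = 0 :=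
    fun r a h => sos_real a h
  have hA1 : ∀ (r : ℕ) (a : Fin r → Polynomial ℝ), ∑ j, (a j)^2 = 0 → ∀ j, a j = 0 :=
    fun r a h => sos_zero hA0 a h
  set q : Fin r → RXY := fun j => (MvPolynomial.aeval (gf a b)) (H j) with hqdef
  rw [pow16] at hsub
  obtain ⟨q1, hq1, hs1⟩ := sos_dvd_pow hA1 k q _ hsub
  have hC16 : (Polynomial.C (Polynomial.C ((16:ℝ)^k)) : RXY) = 16^k := by
    rw [map_pow, map_pow, map_ofNat, map_ofNat]
  have hs2 : ∑ j, (tau (q1 j))^2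
      = Polynomial.X^(2*k) * Polynomial.C (Polynomial.C ((16:ℝ)^k)) := by
    have htau := congrArg tau hs1
    rw [map_sum] at htau
    calc ∑ j, (tau (q1 j))^2
        = tau (Polynomial.C ((16:Polynomial ℝ)^k * Polynomial.X^(2*k))) := by
          rw [← htau]
          exact Finset.sum_congr rfl fun j _ => (map_pow tau _ 2).symm
      _ = _ := by
          rw [tau_C, map_mul, map_pow, map_pow, finner_X]
          rw [show finner (16:Polynomial ℝ) = 16 from map_ofNat _ _, hC16]
          ring
  obtain ⟨q2, hq2, hs3⟩ := sos_dvd_pow hA1 k (fun j => tau (q1 j)) _ hs2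
  obtain ⟨w, hw, hs4⟩ := sos_eq_C hA1 q2 _ hs3
  obtain ⟨t, ht, hs5⟩ := sos_eq_C hA0 w _ hs4
  have hqform : ∀ j, q j = Polynomial.X^k * (Polynomial.C Polynomial.X)^k
      * Polynomial.C (Polynomial.C (t j)) := by
    intro j
    have h1 : tau (q1 j) = Polynomial.X^k * Polynomial.C (Polynomial.C (t j)) := by
      rw [hq2 j, hw j, ht j]
    have h2 : q1 j = tau (Polynomial.X^k * Polynomial.C (Polynomial.C (t j))) := by
      rw [← h1, tau_tau]
    rw [hq1 j, h2, map_mul, map_pow, tau_X, tau_C, finner_C]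
    ring
  intro j
  have hcomp : ∀ (x y : ℝ), (chi x y) (q j)
      = MvPolynomial.aeval (fun l => chi x y (gf a b l)) (H j) := by
    intro x y
    exact DFunLike.congr_fun (MvPolynomial.comp_aeval (gf a b) (chi x y)) (H j)
  have hpa : (fun l => chi (1/2) (1/2) (gf a b l)) = pt a := by
    funext l
    by_cases h1 : l = a
    · simp [gf, pt, h1]
      norm_num
    · by_cases h2 : l = b
      · simp [gf, pt, h1, h2, hab.symm]
      · simp [gf, pt, h1, h2]
  have hpb : (fun l => chi (-(1/2)) (1/2) (gf a b l)) = pt b := by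
    funext l
    by_cases h1 : l = a
    · simp [gf, pt, h1, hab]
    · by_cases h2 : l = b
      · simp [gf, pt, h1, h2, hab.symm]
        norm_num
      · simp [gf, pt, h1, h2]
  have hva : MvPolynomial.aeval (pt a) (H j) = (1/2:ℝ)^k * (1/2:ℝ)^k * t j := by
    rw [← hpa, ← hcomp, hqform j]
    simp [map_mul, map_pow]
  have hvb : MvPolynomial.aeval (pt b) (H j) = (1/2:ℝ)^k * (-(1/2):ℝ)^k * t j := by
    rw [← hpb, ← hcomp, hqform j]
    simp [map_mul, map_pow]
  rw [hva, hvb, hk.neg_pow]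
  ring

end AuxHornSOS

open MvPolynomial

theorem horn_stubborn (k : ℕ) (hk : Odd k) (hk1 : 1 ≤ k) :
    ¬ ∃ (r : ℕ) (H : Fin r → MvPolynomial (Fin 5) ℝ),
      ((X 0 ^ 2 + X 1 ^ 2 + X 2 ^ 2 + X 3 ^ 2 + X 4 ^ 2) ^ 2
        - 4 * (X 0 ^ 2 * X 1 ^ 2 + X 1 ^ 2 * X 2 ^ 2 + X 2 ^ 2 * X 3 ^ 2
          + X 3 ^ 2 * X 4 ^ 2 + X 4 ^ 2 * X 0 ^ 2) : MvPolynomial (Fin 5) ℝ) ^ k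
        = ∑ i, (H i) ^ 2 := by
  rintro ⟨r, H, hH⟩
  set F : MvPolynomial (Fin 5) ℝ :=
      (X 0 ^ 2 + X 1 ^ 2 + X 2 ^ 2 + X 3 ^ 2 + X 4 ^ 2) ^ 2
        - 4 * (X 0 ^ 2 * X 1 ^ 2 + X 1 ^ 2 * X 2 ^ 2 + X 2 ^ 2 * X 3 ^ 2
          + X 3 ^ 2 * X 4 ^ 2 + X 4 ^ 2 * X 0 ^ 2) with hFdef
  have key : ∀ a b : Fin 5, a ≠ b →
      (MvPolynomial.aeval (gf a b)) F
        = (16 : RXY) * (Polynomial.C Polynomial.X)^2 * Polynomial.X^2 →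
      ∀ j, (MvPolynomial.aeval (pt b)) (H j) = - (MvPolynomial.aeval (pt a)) (H j) := by
    intro a b hab hFab
    apply edge_step hk H a b hab
    calc ∑ j, ((MvPolynomial.aeval (gf a b)) (H j))^2
        = (MvPolynomial.aeval (gf a b)) (∑ i, H i ^ 2) := by
          rw [map_sum]
          exact Finset.sum_congr rfl fun j _ => (map_pow _ _ 2).symm
      _ = (MvPolynomial.aeval (gf a b)) (F ^ k) := by rw [hH]
      _ = _ := by rw [map_pow, hFab]
  have e01 := key 0 1 (by decide) (by
    rw [hFdef]
    simp only [map_sub, map_add, map_mul, map_pow, map_ofNat, MvPolynomial.aeval_X,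
      gf_a, gf_b 0 1 (by decide),
      gf_other 0 1 2 (by decide) (by decide), gf_other 0 1 3 (by decide) (by decide),
      gf_other 0 1 4 (by decide) (by decide)]
    ring)
  have e12 := key 1 2 (by decide) (by
    rw [hFdef]
    simp only [map_sub, map_add, map_mul, map_pow, map_ofNat, MvPolynomial.aeval_X,
      gf_a, gf_b 1 2 (by decide),
      gf_other 1 2 0 (by decide) (by decide), gf_other 1 2 3 (by decide) (by decide),
      gf_other 1 2 4 (by decide) (by decide)]
    ring)
  have e23 := key 2 3 (by decide) (by
    rw [hFdef]
    simp only [map_sub, map_add, map_mul, map_pow, map_ofNat, MvPolynomial.aeval_X,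
      gf_a, gf_b 2 3 (by decide),
      gf_other 2 3 0 (by decide) (by decide), gf_other 2 3 1 (by decide) (by decide),
      gf_other 2 3 4 (by decide) (by decide)]
    ring)
  have e34 := key 3 4 (by decide) (by
    rw [hFdef]
    simp only [map_sub, map_add, map_mul, map_pow, map_ofNat, MvPolynomial.aeval_X,
      gf_a, gf_b 3 4 (by decide),
      gf_other 3 4 0 (by decide) (by decide), gf_other 3 4 1 (by decide) (by decide),
      gf_other 3 4 2 (by decide) (by decide)]
    ring)
  have e40 := key 4 0 (by decide) (by
    rw [hFdef]
    simp only [map_sub, map_add, map_mul, map_pow, map_ofNat, MvPolynomial.aeval_X,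
      gf_a, gf_b 4 0 (by decide),
      gf_other 4 0 1 (by decide) (by decide), gf_other 4 0 2 (by decide) (by decide),
      gf_other 4 0 3 (by decide) (by decide)]
    ring)
  have hzero : ∀ j, (MvPolynomial.aeval (pt 0)) (H j) = 0 := by
    intro j
    have h1 := e01 j; have h2 := e12 j; have h3 := e23 j; have h4 := e34 j; have h5 := e40 j
    linarith
  have heval := congrArg (MvPolynomial.aeval (pt 0)) hH
  rw [map_pow, map_sum] at heval
  have hF1 : (MvPolynomial.aeval (pt 0)) F = 1 := by
    rw [hFdef]
    simp only [map_sub, map_add, map_mul, map_pow, map_ofNat, MvPolynomial.aeval_X,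
      pt_self, pt_other 0 1 (by decide), pt_other 0 2 (by decide), pt_other 0 3 (by decide),
      pt_other 0 4 (by decide)]
    norm_num
  rw [hF1, one_pow] at heval
  have hs0 : ∑ j, (MvPolynomial.aeval (pt 0)) (H j ^ 2) = 0 := by
    apply Finset.sum_eq_zero
    intro j _
    rw [map_pow, hzero j]
    ring
  rw [hs0] at heval
  exact one_ne_zero heval
end

section
/- Let P₁ and P₂ be real polynomials in n variables such that P₁^k is a sum of squares for some odd k ≥ 1 and P₂ is a sum of squares. Then (P₁ + P₂)^k is a sum of squares. -/
/-!
With `x = P₁ + P₂` and `y = P₁`, the geometric sum `G = ∑_{i<k} xⁱ y^(k-1-i)` satisfies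
`(P₁ + P₂)ᵏ = P₁ᵏ + G * P₂`. For odd `k = 2m + 1` the form `G` is a sum of squares, by the
identity `2 G = (xᵐ)² + (yᵐ)² + (x + y)² ∑_{j<m} (xʲ y^(m-1-j))²` and `½ = (½)² + (½)²`.
Sums of squares are closed under addition and multiplication, so `(P₁ + P₂)ᵏ` is one.
-/

open Finset

theorem isSumSq_iff_exists_fin_sum_sq {R : Type*} [CommSemiring R] {s : R} :
    IsSumSq s ↔ ∃ (r : ℕ) (h : Fin r → R), s = ∑ i, h i ^ 2 := by
  refine ⟨fun hs => ?_, fun ⟨r, h, hs⟩ => hs ▸ IsSumSq.sum_sq _ h⟩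
  induction hs with
  | zero => exact ⟨0, ![], by simp⟩
  | sq_add a _ ih =>
    obtain ⟨r, h, rfl⟩ := ih
    exact ⟨r + 1, Fin.cons a h, by simp [Fin.sum_univ_succ, sq]⟩

theorem IsSumSq.invOf_two {R : Type*} [Semiring R] [Invertible (2 : R)] : IsSumSq (⅟2 : R) := by
  have h : (⅟2 : R) = ⅟2 * ⅟2 + ⅟2 * ⅟2 := by
    rw [← mul_add, ← two_mul, mul_invOf_self, mul_one]
  rw [h]
  exact .sq_add _ (.mul_self _)

theorem two_mul_geom_sum₂_even_eq {R : Type*} [CommRing R] (x y : R) (m : ℕ) :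
    2 * ∑ i ∈ range (2 * m + 1), x ^ i * y ^ (2 * m - i) =
      (x ^ m) ^ 2 + (y ^ m) ^ 2 +
        (x + y) ^ 2 * ∑ j ∈ range m, (x ^ 2) ^ j * (y ^ 2) ^ (m - 1 - j) := by
  induction m with
  | zero => simp [one_add_one_eq_two]
  | succ m ih =>
    have hodd : ∑ i ∈ range (2 * (m + 1) + 1), x ^ i * y ^ (2 * (m + 1) - i) =
        x ^ (2 * m + 2) + y * x ^ (2 * m + 1) +
          y ^ 2 * ∑ i ∈ range (2 * m + 1), x ^ i * y ^ (2 * m - i) := by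
      rw [show 2 * (m + 1) = 2 * m + 1 + 1 by ring, geom_sum₂_succ_eq,
        show 2 * m + 2 - 1 = 2 * m + 1 by omega, geom_sum₂_succ_eq, Nat.add_sub_cancel]
      ring
    have heven : ∑ j ∈ range (m + 1), (x ^ 2) ^ j * (y ^ 2) ^ (m + 1 - 1 - j) =
        (x ^ 2) ^ m + y ^ 2 * ∑ j ∈ range m, (x ^ 2) ^ j * (y ^ 2) ^ (m - 1 - j) := by
      rw [add_tsub_cancel_right, geom_sum₂_succ_eq]
    rw [hodd, heven]
    linear_combination y ^ 2 * ih

theorem isSumSq_geom_sum₂_of_odd {R : Type*} [CommRing R] [Invertible (2 : R)] (x y : R)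
    {k : ℕ} (hk : Odd k) : IsSumSq (∑ i ∈ range k, x ^ i * y ^ (k - 1 - i)) := by
  obtain ⟨m, rfl⟩ := hk
  have hsq : IsSumSq ((x + y) ^ 2 * ∑ j ∈ range m, (x ^ 2) ^ j * (y ^ 2) ^ (m - 1 - j)) := by
    have hterm : ∀ j, (x ^ 2) ^ j * (y ^ 2) ^ (m - 1 - j) = (x ^ j * y ^ (m - 1 - j)) ^ 2 :=
      fun j => by ring
    simp only [hterm]
    exact (IsSquare.sq _).isSumSq.mul (IsSumSq.sum_sq _ _)
  rw [Nat.add_sub_cancel, ← invOf_mul_cancel_left (2 : R) (∑ i ∈ _, _),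
    two_mul_geom_sum₂_even_eq]
  exact IsSumSq.invOf_two.mul (((IsSquare.sq _).isSumSq.add (IsSquare.sq _).isSumSq).add hsq)

theorem IsSumSq.add_pow_of_odd {R : Type*} [CommRing R] [Invertible (2 : R)] {a b : R} {k : ℕ}
    (hk : Odd k) (ha : IsSumSq (a ^ k)) (hb : IsSumSq b) : IsSumSq ((a + b) ^ k) := by
  have hsplit : (a + b) ^ k = a ^ k + (∑ i ∈ range k, (a + b) ^ i * a ^ (k - 1 - i)) * b := by
    refine eq_add_of_sub_eq' ?_
    rw [← geom_sum₂_mul, add_sub_cancel_left]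
  rw [hsplit]
  exact ha.add ((isSumSq_geom_sum₂_of_odd _ _ hk).mul hb)

theorem sum_with_sos_power_general (n k : ℕ) (hk : Odd k)
    (P₁ P₂ : MvPolynomial (Fin n) ℝ)
    (h1 : ∃ (r : ℕ) (h : Fin r → MvPolynomial (Fin n) ℝ), P₁ ^ k = ∑ i, (h i) ^ 2)
    (h2 : ∃ (r : ℕ) (h : Fin r → MvPolynomial (Fin n) ℝ), P₂ = ∑ i, (h i) ^ 2) :
    ∃ (r : ℕ) (h : Fin r → MvPolynomial (Fin n) ℝ), (P₁ + P₂) ^ k = ∑ i, (h i) ^ 2 := by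
  simp only [← isSumSq_iff_exists_fin_sum_sq] at h1 h2 ⊢
  let : Invertible (2 : MvPolynomial (Fin n) ℝ) :=
    (invertibleTwo.map (algebraMap ℝ _)).copy 2 (map_ofNat _ 2).symm
  exact h1.add_pow_of_odd hk h2

theorem sum_with_sos_power (n k : ℕ) (hk : Odd k) (hk1 : 1 ≤ k)
    (P₁ P₂ : MvPolynomial (Fin n) ℝ)
    (h1 : ∃ (r : ℕ) (h : Fin r → MvPolynomial (Fin n) ℝ), P₁ ^ k = ∑ i, (h i) ^ 2)
    (h2 : ∃ (r : ℕ) (h : Fin r → MvPolynomial (Fin n) ℝ), P₂ = ∑ i, (h i) ^ 2) :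
    ∃ (r : ℕ) (h : Fin r → MvPolynomial (Fin n) ℝ), (P₁ + P₂) ^ k = ∑ i, (h i) ^ 2 :=
  sum_with_sos_power_general n k hk P₁ P₂ h1 h2
end

section
/- Let P and P̃ be real polynomials such that P^k and P̃^{k̃} are sums of squares, with k and k̃ odd positive integers. Then (P + P̃)^{k + k̃ - 1} is a sum of squares. In particular, the set of nonnegative polynomials some odd power of which is a sum of squares is closed under addition. -/
open Polynomial Finset Filter

lemma pascal_sum (m : ℕ) (t : ℝ) : ∀ s : ℕ,
    ∑ i ∈ range (s+1), ((m+1).choose i : ℝ) * t^i =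
      ∑ i ∈ range (s+1), (m.choose i : ℝ) * t^i + t * ∑ i ∈ range s, (m.choose i : ℝ) * t^i := by
  intro s
  induction s with
  | zero => simp
  | succ s ih =>
    rw [sum_range_succ, ih, sum_range_succ (fun i => (m.choose i : ℝ) * t^i) (s+1),
      sum_range_succ (fun i => (m.choose i : ℝ) * t^i) s, Nat.choose_succ_succ]
    push_cast
    ring

lemma trunc_binom_nonneg (m r : ℕ) (hrm : 2*r < m) (t : ℝ) :
    0 ≤ ∑ i ∈ range (2*r+1), (m.choose i : ℝ) * t^i := by
  obtain ⟨m', rfl⟩ : ∃ m', m = m'+1 := ⟨m-1, by omega⟩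
  rcases Nat.eq_zero_or_pos r with rfl | hr
  · simp
  set F : ℝ[X] := ∑ i ∈ range (2*r+1), C ((m'+1).choose i : ℝ) * X^i with hF
  have heval : ∀ x : ℝ, F.eval x = ∑ i ∈ range (2*r+1), ((m'+1).choose i : ℝ) * x^i := by
    intro x; simp [hF, eval_finset_sum]
  have hcoeff : F.coeff (2*r) = ((m'+1).choose (2*r) : ℝ) := by
    simp only [hF, finset_sum_coeff, coeff_C_mul, coeff_X_pow]
    rw [Finset.sum_eq_single (2*r)]
    · simp
    · intro b _ hne; simp [Ne.symm hne]
    · intro h; exact absurd (Finset.self_mem_range_succ (2*r)) h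
  have hchoosepos : (0:ℝ) < ((m'+1).choose (2*r) : ℝ) := by
    exact_mod_cast Nat.choose_pos (show 2*r ≤ m'+1 by omega)
  have hndle : F.natDegree ≤ 2*r := by
    apply Polynomial.natDegree_sum_le_of_forall_le
    intro i hi
    have := Finset.mem_range.mp hi
    exact le_trans (natDegree_C_mul_X_pow_le _ _) (by omega)
  have hnd : F.natDegree = 2*r := by
    refine le_antisymm hndle (le_natDegree_of_ne_zero ?_)
    rw [hcoeff]; exact ne_of_gt hchoosepos
  have hlc : F.leadingCoeff = ((m'+1).choose (2*r) : ℝ) := by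
    rw [leadingCoeff, hnd, hcoeff]
  have hdegpos : 0 < F.degree := by
    rw [← natDegree_pos_iff_degree_pos, hnd]; omega
  have h1 : Tendsto (fun x => F.eval x) atTop atTop :=
    F.tendsto_atTop_of_leadingCoeff_nonneg hdegpos (by rw [hlc]; exact hchoosepos.le)
  have h2 : Tendsto (fun x => F.eval x) atBot atTop := by
    set G : ℝ[X] := F.comp (-X) with hG
    have hevG : ∀ x : ℝ, G.eval x = F.eval (-x) := by intro x; simp [hG, eval_comp]
    have hndX : (-X : ℝ[X]).natDegree = 1 := by simp
    have hlcG : G.leadingCoeff = F.leadingCoeff * (-1) ^ F.natDegree := by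
      rw [hG, leadingCoeff_comp (by rw [hndX]; norm_num)]
      simp
    have hdegG : 0 < G.degree := by
      rw [← natDegree_pos_iff_degree_pos, hG, natDegree_comp, hndX, hnd]; omega
    have h3 : Tendsto (fun x => G.eval x) atTop atTop := by
      apply G.tendsto_atTop_of_leadingCoeff_nonneg hdegG
      rw [hlcG, hnd, hlc]
      simp [pow_mul]
    have h4 : Tendsto (fun x : ℝ => -x) atBot atTop := tendsto_neg_atBot_atTop
    have h5 := h3.comp h4
    refine h5.congr (fun x => ?_)
    simp [Function.comp, hevG]
  have hco : Tendsto (fun x => F.eval x) (cocompact ℝ) atTop := by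
    rw [cocompact_eq_atBot_atTop, tendsto_sup]
    exact ⟨h2, h1⟩
  obtain ⟨t₀, ht₀⟩ := F.continuous.exists_forall_le hco
  have hmin : IsLocalMin (fun x => F.eval x) t₀ := Filter.Eventually.of_forall ht₀
  have hderiv0 : (derivative F).eval t₀ = 0 := by
    rw [← Polynomial.deriv]; exact hmin.deriv_eq_zero
  have key : ∀ i : ℕ, ((m'+1).choose (i+1) : ℝ) * ((i:ℝ)+1) = (m'+1 : ℝ) * (m'.choose i : ℝ) := by
    intro i
    exact_mod_cast (Nat.add_one_mul_choose_eq m' i).symm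
  have hder : (derivative F).eval t₀ =
      (m'+1 : ℝ) * ∑ i ∈ range (2*r), (m'.choose i : ℝ) * t₀^i := by
    rw [hF, derivative_sum]
    simp only [derivative_C_mul_X_pow]
    rw [eval_finset_sum]
    simp only [eval_mul, eval_C, eval_pow, eval_X]
    rw [Finset.sum_range_succ']
    simp only [Nat.cast_zero, mul_zero, Nat.cast_succ, Nat.add_sub_cancel, zero_mul, add_zero,
      Nat.cast_ofNat, Nat.choose_zero_right]
    rw [Finset.mul_sum]
    refine Finset.sum_congr rfl fun i _ => ?_
    rw [key i, mul_assoc]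
  have hS : ∑ i ∈ range (2*r), (m'.choose i : ℝ) * t₀^i = 0 := by
    have h6 := hderiv0
    rw [hder] at h6
    have hm : (m'+1 : ℝ) ≠ 0 := by positivity
    exact (mul_eq_zero.mp h6).resolve_left hm
  have hFt₀ : 0 ≤ F.eval t₀ := by
    rw [heval, pascal_sum m' t₀ (2*r), sum_range_succ, hS]
    simp only [mul_zero, add_zero, zero_add]
    have h5 : (0:ℝ) ≤ t₀^(2*r) := by rw [mul_comm, pow_mul]; positivity
    have h7 : (0:ℝ) ≤ (m'.choose (2*r) : ℝ) := by positivity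
    nlinarith
  calc (0:ℝ) ≤ F.eval t₀ := hFt₀
    _ ≤ F.eval t := ht₀ t
    _ = _ := heval t

open Polynomial

lemma sum_two_sq_of_natDegree_le : ∀ N : ℕ, ∀ p : ℝ[X], p.natDegree ≤ N →
    (∀ x : ℝ, 0 ≤ p.eval x) → ∃ g h : ℝ[X], p = g^2 + h^2 := by
  intro N
  induction N using Nat.strong_induction_on with
  | _ N ih =>
  intro p hdeg hpos
  by_cases h0 : p.natDegree = 0
  · obtain ⟨c, rfl⟩ := Polynomial.natDegree_eq_zero.mp h0
    have hc : 0 ≤ c := by simpa using hpos 0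
    refine ⟨C (Real.sqrt c), 0, ?_⟩
    rw [← C_pow, Real.sq_sqrt hc]
    ring
  · have hp0 : p ≠ 0 := fun h => h0 (by simp [h])
    have hdegC : p.degree ≠ 0 := by
      intro h
      exact h0 (natDegree_eq_zero_iff_degree_le_zero.mpr h.le)
    obtain ⟨z, haev⟩ : ∃ z : ℂ, aeval z p = 0 :=
      IsAlgClosed.exists_aeval_eq_zero ℂ p hdegC
    have hN1 : 1 ≤ N := le_trans (by omega) hdeg
    by_cases him : z.im = 0
    · -- real root
      lift z to ℝ using him with a
      erw [aeval_ofReal, RCLike.ofReal_eq_zero] at haev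
      have hroot : p.eval a = 0 := by simpa using haev
      have hmin : IsLocalMin (fun x => p.eval x) a :=
        Filter.Eventually.of_forall fun y => by simpa [hroot] using hpos y
      have hderiv0 : (derivative p).eval a = 0 := by
        rw [← Polynomial.deriv]; exact hmin.deriv_eq_zero
      obtain ⟨q1, hq1⟩ := dvd_iff_isRoot.mpr hroot
      have hq1a : q1.eval a = 0 := by
        have hd := congrArg derivative hq1
        rw [derivative_mul, derivative_sub, derivative_X, derivative_C, sub_zero, one_mul] at hd
        have h3 := congrArg (eval a) hd
        simp [hderiv0, hroot] at h3
        tauto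
      obtain ⟨q, hq⟩ := dvd_iff_isRoot.mpr hq1a
      have hpq : p = (X - C a)^2 * q := by rw [hq1, hq]; ring
      have hq0 : q ≠ 0 := by rintro rfl; simp at hpq; exact hp0 hpq
      have hqpos : ∀ x : ℝ, 0 ≤ q.eval x := by
        have hsub : ({a}ᶜ : Set ℝ) ⊆ {x : ℝ | 0 ≤ q.eval x} := by
          intro x hx
          have hxa : x ≠ a := hx
          have h1 : 0 ≤ (x - a)^2 * q.eval x := by
            have := hpos x
            rw [hpq] at this
            simpa using this
          have h2 : 0 < (x - a)^2 := by
            have h4 : x - a ≠ 0 := sub_ne_zero.mpr hxa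
            positivity
          simp only [Set.mem_setOf_eq]
          nlinarith [h1, h2]
        have hcl : IsClosed {x : ℝ | 0 ≤ q.eval x} :=
          isClosed_le continuous_const q.continuous
        have hd : Dense ({a}ᶜ : Set ℝ) := dense_compl_singleton a
        have huniv : {x : ℝ | 0 ≤ q.eval x} = Set.univ := by
          apply Set.eq_univ_of_univ_subset
          calc Set.univ = closure ({a}ᶜ : Set ℝ) := hd.closure_eq.symm
            _ ⊆ closure {x : ℝ | 0 ≤ q.eval x} := closure_mono hsub
            _ = {x : ℝ | 0 ≤ q.eval x} := hcl.closure_eq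
        intro x
        exact Set.eq_univ_iff_forall.mp huniv x
      have hnd : p.natDegree = 2 + q.natDegree := by
        rw [hpq, natDegree_mul (pow_ne_zero 2 (X_sub_C_ne_zero a)) hq0]
        rw [natDegree_pow, natDegree_X_sub_C]
      have hlt : q.natDegree < N := by omega
      obtain ⟨g, h, hgh⟩ := ih q.natDegree hlt q le_rfl hqpos
      exact ⟨(X - C a) * g, (X - C a) * h, by rw [hpq, hgh]; ring⟩
    · -- complex root
      obtain ⟨q, hq⟩ := p.quadratic_dvd_of_aeval_eq_zero_im_ne_zero haev him
      set D : ℝ[X] := X ^ 2 - C (2 * z.re) * X + C (‖z‖ ^ 2) with hD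
      have hnormsq : ‖z‖^2 = z.re^2 + z.im^2 := by
        rw [Complex.sq_norm, Complex.normSq_apply]; ring
      have hDsos : D = (X - C z.re)^2 + (C z.im)^2 := by
        have hC1 : C (‖z‖^2) = C (z.re^2) + C (z.im^2) := by rw [hnormsq, map_add]
        have hC2 : C (2*z.re) = 2 * C z.re := by rw [map_mul, map_ofNat]
        rw [hD, hC1, hC2, C_pow, C_pow]
        ring
      have hDeval : ∀ x : ℝ, D.eval x = (x - z.re)^2 + z.im^2 := by
        intro x; rw [hDsos]; simp
      have hDpos : ∀ x : ℝ, 0 < D.eval x := by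
        intro x
        rw [hDeval]
        positivity
      have hq0 : q ≠ 0 := by rintro rfl; simp at hq; exact hp0 hq
      have hD0 : D ≠ 0 := fun h => by simpa [h] using hDpos 0
      have hqpos : ∀ x : ℝ, 0 ≤ q.eval x := by
        intro x
        have h1 := hpos x
        rw [hq] at h1
        simp only [eval_mul] at h1
        nlinarith [h1, hDpos x]
      have hndD : D.natDegree = 2 := by
        rw [hD]; compute_degree!
      have hnd : p.natDegree = 2 + q.natDegree := by
        rw [hq, natDegree_mul hD0 hq0, hndD]
      have hlt : q.natDegree < N := by omega
      obtain ⟨g, h, hgh⟩ := ih q.natDegree hlt q le_rfl hqpos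
      refine ⟨(X - C z.re) * g - C z.im * h, (X - C z.re) * h + C z.im * g, ?_⟩
      rw [hq, hDsos, hgh]
      ring

theorem nonneg_poly_sum_two_sq (p : ℝ[X]) (hpos : ∀ x : ℝ, 0 ≤ p.eval x) :
    ∃ g h : ℝ[X], p = g^2 + h^2 :=
  sum_two_sq_of_natDegree_le p.natDegree p le_rfl hpos

open Polynomial

section SumSq
variable {A : Type*} [CommRing A]

lemma sum_sq_isSumSq : ∀ (r : ℕ) (f : Fin r → A), IsSumSq (∑ i, f i ^ 2)
  | 0, f => by simpa using IsSumSq.zero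
  | (r+1), f => by
    rw [Fin.sum_univ_succ, sq]
    exact IsSumSq.sq_add _ (sum_sq_isSumSq r _)

lemma IsSumSq.exists_fin {p : A} (h : IsSumSq p) :
    ∃ (r : ℕ) (f : Fin r → A), p = ∑ i, f i ^ 2 := by
  induction h with
  | zero => exact ⟨0, (fun i => 0), by simp⟩
  | @sq_add a S pS ih =>
    obtain ⟨r, f, rfl⟩ := ih
    exact ⟨r+1, Fin.cons a f, by rw [Fin.sum_univ_succ]; simp [sq]⟩

lemma IsSumSq.mul_self_mul (a : A) {q : A} (hq : IsSumSq q) : IsSumSq (a * a * q) := by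
  induction hq with
  | zero => simpa using IsSumSq.zero
  | @sq_add b T pT ih =>
    rw [mul_add]
    refine IsSumSq.add ?_ ih
    have h : a*a*(b*b) = (a*b)*(a*b) + 0 := by ring
    rw [h]
    exact IsSumSq.sq_add _ IsSumSq.zero

lemma IsSumSq.mul' {p q : A} (hp : IsSumSq p) (hq : IsSumSq q) : IsSumSq (p * q) := by
  induction hp with
  | zero => simpa using IsSumSq.zero
  | @sq_add a S pS ih =>
    rw [add_mul]
    exact IsSumSq.add (hq.mul_self_mul a) ih

end SumSq

lemma natDegree_le_of_sq_add_sq {g h : ℝ[X]} {r : ℕ} (hf : (g^2 + h^2).natDegree ≤ 2*r) :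
    g.natDegree ≤ r := by
  by_contra hc
  push_neg at hc
  set d := max g.natDegree h.natDegree with hd
  have hdg : r < d := lt_of_lt_of_le hc (le_max_left _ _)
  have hcoeff : (g^2+h^2).coeff (2*d) = 0 :=
    coeff_eq_zero_of_natDegree_lt (lt_of_le_of_lt hf (by omega))
  have key : ∀ u : ℝ[X], u.natDegree ≤ d → (u^2).coeff (2*d) = (u.coeff d)^2 := by
    intro u hu
    rcases eq_or_lt_of_le hu with heq | hlt
    · rw [sq, two_mul, ← heq, coeff_mul_degree_add_degree, leadingCoeff, heq, sq]
    · have h1 : (u^2).natDegree < 2*d := by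
        rw [natDegree_pow]; omega
      rw [coeff_eq_zero_of_natDegree_lt h1, coeff_eq_zero_of_natDegree_lt hlt]
      simp
  have hz : g.coeff d = 0 ∧ h.coeff d = 0 := by
    rw [coeff_add, key g (le_max_left _ _), key h (le_max_right _ _)] at hcoeff
    constructor <;> nlinarith [sq_nonneg (g.coeff d), sq_nonneg (h.coeff d)]
  rcases max_cases g.natDegree h.natDegree with ⟨hmax, _⟩ | ⟨hmax, _⟩
  · have hdg' : d = g.natDegree := by rw [hd, hmax]
    have hg0 : g = 0 := leadingCoeff_eq_zero.mp (by rw [leadingCoeff, ← hdg']; exact hz.1)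
    rw [hg0, natDegree_zero] at hc
    omega
  · have hdh : d = h.natDegree := by rw [hd, hmax]
    have hh0 : h = 0 := leadingCoeff_eq_zero.mp (by rw [leadingCoeff, ← hdh]; exact hz.2)
    have hd0 : d = 0 := by rw [hdh, hh0, natDegree_zero]
    omega

variable {n : ℕ}

local notation "R" => MvPolynomial (Fin n) ℝ

noncomputable def φ : MvPolynomial (Fin n) ℝ →+* FractionRing (MvPolynomial (Fin n) ℝ) :=
  algebraMap _ _

lemma φ_inj : Function.Injective (φ (n := n)) := IsFractionRing.injective _ _

lemma transfer (P P' : R) (hP' : P' ≠ 0) (b : ℕ) (u : ℝ[X]) (hu : u.natDegree < b + 1) :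
    φ (∑ j ∈ range (b+1), MvPolynomial.C (u.coeff j) * P^j * P'^(b-j))
      = (φ P')^b * Polynomial.eval₂ ((φ (n := n)).comp (MvPolynomial.C : ℝ →+* MvPolynomial (Fin n) ℝ))
          (φ P / φ P') u := by
  have hρ : φ P' ≠ 0 := fun h => hP' ((map_eq_zero_iff _ φ_inj).mp h)
  rw [map_sum, Polynomial.eval₂_eq_sum_range' _ hu, Finset.mul_sum]
  refine Finset.sum_congr rfl fun j hj => ?_
  have hj' : j ≤ b := by have := Finset.mem_range.mp hj; omega
  rw [map_mul, map_mul, map_pow, map_pow, RingHom.comp_apply]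
  rw [div_pow, pow_sub₀ (φ P') hρ hj']
  field_simp

lemma form_isSumSq (m r : ℕ) (hrm : 2*r < m) (P P' : R) :
    IsSumSq (∑ i ∈ range (2*r+1), MvPolynomial.C ((m.choose i : ℝ)) * P^i * P'^(2*r-i)) := by
  by_cases hP' : P' = 0
  · subst hP'
    rw [Finset.sum_eq_single (2*r)]
    · have hc : (0:ℝ) ≤ (m.choose (2*r) : ℝ) := by positivity
      have h2 : (MvPolynomial.C (Real.sqrt (m.choose (2*r))) : R)
            * MvPolynomial.C (Real.sqrt (m.choose (2*r)))
          = MvPolynomial.C ((m.choose (2*r) : ℝ)) := by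
        rw [← map_mul, Real.mul_self_sqrt hc]
      have h3 : MvPolynomial.C ((m.choose (2*r) : ℝ)) * P^(2*r) * (0:R)^(2*r-2*r)
          = (MvPolynomial.C (Real.sqrt (m.choose (2*r))) * P^r)
              * (MvPolynomial.C (Real.sqrt (m.choose (2*r))) * P^r) + 0 := by
        rw [Nat.sub_self, pow_zero, mul_one, ← h2, show 2*r = r + r by ring, pow_add]
        ring
      rw [h3]
      exact IsSumSq.sq_add _ IsSumSq.zero
    · intro i hi hne
      have h4 : (0:R)^(2*r-i) = 0 := zero_pow (by have := mem_range.mp hi; omega)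
      rw [h4, mul_zero]
    · intro hmem; exact absurd (self_mem_range_succ _) hmem
  · set f : ℝ[X] := ∑ i ∈ range (2*r+1), Polynomial.C ((m.choose i : ℝ)) * X^i with hf
    have hfc : ∀ i, i < 2*r+1 → f.coeff i = (m.choose i : ℝ) := by
      intro i hi
      rw [hf]
      simp only [finset_sum_coeff, coeff_C_mul, coeff_X_pow]
      rw [Finset.sum_eq_single i]
      · simp
      · intro b _ hne; simp [Ne.symm hne]
      · intro hmem; exact absurd (mem_range.mpr hi) hmem
    have hfdeg : f.natDegree ≤ 2*r := by
      apply natDegree_sum_le_of_forall_le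
      intro i hi
      have := mem_range.mp hi
      exact le_trans (natDegree_C_mul_X_pow_le _ _) (by omega)
    have hfpos : ∀ x : ℝ, 0 ≤ f.eval x := by
      intro x
      rw [hf]
      simpa [eval_finset_sum] using trunc_binom_nonneg m r hrm x
    obtain ⟨g, h, hgh⟩ := nonneg_poly_sum_two_sq f hfpos
    have hgd : g.natDegree < r+1 := Nat.lt_succ_of_le (natDegree_le_of_sq_add_sq (hgh ▸ hfdeg))
    have hhd : h.natDegree < r+1 := Nat.lt_succ_of_le
      (natDegree_le_of_sq_add_sq (((add_comm (g^2) (h^2)) ▸ hgh) ▸ hfdeg))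
    set G : R := ∑ j ∈ range (r+1), MvPolynomial.C (g.coeff j) * P^j * P'^(r-j) with hG
    set H : R := ∑ j ∈ range (r+1), MvPolynomial.C (h.coeff j) * P^j * P'^(r-j) with hH
    have hQ : ∑ i ∈ range (2*r+1), MvPolynomial.C ((m.choose i : ℝ)) * P^i * P'^(2*r-i)
        = G*G + (H*H + 0) := by
      have hLHS : ∑ i ∈ range (2*r+1), MvPolynomial.C ((m.choose i : ℝ)) * P^i * P'^(2*r-i)
          = ∑ i ∈ range (2*r+1), MvPolynomial.C (f.coeff i) * P^i * P'^(2*r-i) := by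
        refine Finset.sum_congr rfl fun i hi => ?_
        rw [hfc i (mem_range.mp hi)]
      rw [hLHS]
      apply φ_inj
      rw [map_add, map_add, map_mul, map_mul, map_zero, add_zero]
      rw [transfer P P' hP' (2*r) f (by omega),
          transfer P P' hP' r g hgd, transfer P P' hP' r h hhd]
      rw [hgh, Polynomial.eval₂_add, Polynomial.eval₂_pow, Polynomial.eval₂_pow]
      ring
    rw [hQ]
    exact IsSumSq.sq_add _ (IsSumSq.sq_add _ IsSumSq.zero)

lemma split_pow {n : ℕ} (P P' : MvPolynomial (Fin n) ℝ) (k k' : ℕ) (hk1 : 1 ≤ k) (hk'1 : 1 ≤ k') :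
    (P + P') ^ (k + k' - 1) =
      P'^k' * (∑ i ∈ range k,
          MvPolynomial.C (((k+k'-1).choose i : ℝ)) * P^i * P'^(k-1-i))
      + P^k * (∑ i ∈ range k',
          MvPolynomial.C (((k+k'-1).choose i : ℝ)) * P'^i * P^(k'-1-i)) := by
  set m := k + k' - 1 with hm
  rw [add_pow]
  conv_lhs => rw [range_eq_Ico, ← Finset.sum_Ico_consecutive _ (Nat.zero_le k)
    (by omega : k ≤ m+1)]
  congr 1
  · rw [← range_eq_Ico, Finset.mul_sum]
    refine Finset.sum_congr rfl fun i hi => ?_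
    have hik : i < k := mem_range.mp hi
    have h1 : m - i = k' + (k-1-i) := by omega
    rw [h1, pow_add, ← map_natCast (MvPolynomial.C : ℝ →+* MvPolynomial (Fin n) ℝ) (m.choose i)]
    push_cast
    ring
  · rw [Finset.sum_Ico_eq_sum_range]
    have hm1k : m + 1 - k = k' := by omega
    rw [hm1k, Finset.mul_sum, ← Finset.sum_range_reflect]
    refine Finset.sum_congr rfl fun j hj => ?_
    have hjk : j < k' := mem_range.mp hj
    have h1 : m - (k + (k'-1-j)) = j := by omega
    have h3 : m.choose (k + (k'-1-j)) = m.choose j := by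
      rw [← Nat.choose_symm (by omega : k + (k'-1-j) ≤ m), h1]
    rw [h1, h3, ← map_natCast (MvPolynomial.C : ℝ →+* MvPolynomial (Fin n) ℝ)
      (m.choose j), pow_add]
    push_cast
    ring

theorem sum_of_sos_powers (n k k' : ℕ) (hk : Odd k) (hk' : Odd k')
    (hk1 : 1 ≤ k) (hk'1 : 1 ≤ k')
    (P P' : MvPolynomial (Fin n) ℝ)
    (h1 : ∃ (r : ℕ) (h : Fin r → MvPolynomial (Fin n) ℝ), P ^ k = ∑ i, (h i) ^ 2)
    (h2 : ∃ (r : ℕ) (h : Fin r → MvPolynomial (Fin n) ℝ), P' ^ k' = ∑ i, (h i) ^ 2) :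
    ∃ (r : ℕ) (h : Fin r → MvPolynomial (Fin n) ℝ),
      (P + P') ^ (k + k' - 1) = ∑ i, (h i) ^ 2 := by
  obtain ⟨c, hc⟩ := hk
  obtain ⟨c', hc'⟩ := hk'
  have h1' : IsSumSq (P^k) := by
    obtain ⟨r, f, hf⟩ := h1
    rw [hf]
    exact sum_sq_isSumSq r f
  have h2' : IsSumSq (P'^k') := by
    obtain ⟨r, f, hf⟩ := h2
    rw [hf]
    exact sum_sq_isSumSq r f
  have e1 : ∑ i ∈ range k, MvPolynomial.C (((k+k'-1).choose i : ℝ)) * P^i * P'^(k-1-i)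
      = ∑ i ∈ range (2*c+1), MvPolynomial.C (((k+k'-1).choose i : ℝ)) * P^i * P'^(2*c-i) := by
    refine Finset.sum_congr (by rw [hc]) fun i hi => ?_
    rw [show k-1-i = 2*c-i from by omega]
  have e2 : ∑ i ∈ range k', MvPolynomial.C (((k+k'-1).choose i : ℝ)) * P'^i * P^(k'-1-i)
      = ∑ i ∈ range (2*c'+1), MvPolynomial.C (((k+k'-1).choose i : ℝ)) * P'^i * P^(2*c'-i) := by
    refine Finset.sum_congr (by rw [hc']) fun i hi => ?_
    rw [show k'-1-i = 2*c'-i from by omega]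
  have hQ1 : IsSumSq (∑ i ∈ range k,
      MvPolynomial.C (((k+k'-1).choose i : ℝ)) * P^i * P'^(k-1-i)) := by
    rw [e1]
    exact form_isSumSq (k+k'-1) c (by omega) P P'
  have hQ2 : IsSumSq (∑ i ∈ range k',
      MvPolynomial.C (((k+k'-1).choose i : ℝ)) * P'^i * P^(k'-1-i)) := by
    rw [e2]
    exact form_isSumSq (k+k'-1) c' (by omega) P' P
  have hmain : IsSumSq ((P + P') ^ (k + k' - 1)) := by
    rw [split_pow P P' k k' hk1 hk'1]
    exact IsSumSq.add (h2'.mul' hQ1) (h1'.mul' hQ2)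
  exact hmain.exists_fin
end

section
/- Let F be a real polynomial in n variables that is nonnegative on ℝⁿ and such that F^k is not a sum of squares for any odd k ≥ 1. Then for every positive integer m, the polynomial X₁^{2m}·F is nonnegative and (X₁^{2m}·F)^k is not a sum of squares for any odd k ≥ 1. -/
/-!
Substituting `X i := 0` is a ring map whose kernel is `(X i)`. It sends a sum of squares
`∑ H j ^ 2` divisible by `X i` to a sum of squares that vanishes, hence each `H j` vanishes
under it, i.e. `X i ∣ H j`. Cancelling `X i ^ 2` and iterating, `X i ^ (2N) * p = ∑ H j ^ 2`
forces `p` itself to be a sum of as many squares. Applied to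
`(X 0 ^ (2m) * F) ^ k = X 0 ^ (2mk) * F ^ k`, a representation of the left side would give one
of `F ^ k`.
-/

open MvPolynomial

namespace MvPolynomial

variable {σ R ι : Type*}

theorem X_dvd_sub_aeval_update_zero [CommRing R] [DecidableEq σ] (i : σ) (p : MvPolynomial σ R) :
    X i ∣ p - aeval (Function.update X i 0) p := by
  have h : (Ideal.Quotient.mkₐ R (Ideal.span {X i})).comp (aeval (Function.update X i 0)) =
      Ideal.Quotient.mkₐ R _ := by
    ext j
    by_cases hj : j = i
    · subst hj; simp
    · simp [hj]
  rw [← Ideal.mem_span_singleton, ← Ideal.Quotient.eq]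
  exact (AlgHom.congr_fun h p).symm

theorem X_dvd_iff_aeval_update_zero [CommRing R] [DecidableEq σ] {i : σ} {p : MvPolynomial σ R} :
    X i ∣ p ↔ aeval (Function.update (X : σ → MvPolynomial σ R) i 0) p = 0 := by
  refine ⟨fun ⟨q, hq⟩ => by simp [hq], fun h => ?_⟩
  simpa only [h, sub_zero] using X_dvd_sub_aeval_update_zero i p

variable [CommRing R] [LinearOrder R] [IsStrictOrderedRing R] [Fintype ι]

theorem eq_zero_of_sum_sq_eq_zero {q : ι → MvPolynomial σ R} (h : ∑ j, q j ^ 2 = 0) (j : ι) :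
    q j = 0 := by
  refine funext fun x => ?_
  have hx : ∑ j, eval x (q j) ^ 2 = 0 := by simpa using congrArg (eval x) h
  simpa using (Finset.sum_eq_zero_iff_of_nonneg fun j _ => sq_nonneg _).mp hx j (Finset.mem_univ j)

theorem X_dvd_of_X_dvd_sum_sq {i : σ} {H : ι → MvPolynomial σ R} (h : X i ∣ ∑ j, H j ^ 2)
    (j : ι) : X i ∣ H j := by
  classical
  rw [X_dvd_iff_aeval_update_zero] at h ⊢
  simp only [map_sum, map_pow] at h
  exact eq_zero_of_sum_sq_eq_zero h j

theorem exists_sum_sq_of_X_sq_mul_eq_sum_sq {i : σ} {p : MvPolynomial σ R}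
    {H : ι → MvPolynomial σ R} (h : X i ^ 2 * p = ∑ j, H j ^ 2) :
    ∃ G : ι → MvPolynomial σ R, p = ∑ j, G j ^ 2 := by
  choose G hG using
    X_dvd_of_X_dvd_sum_sq (h ▸ dvd_mul_of_dvd_left (dvd_pow_self _ two_ne_zero) p)
  refine ⟨G, mul_left_cancel₀ (pow_ne_zero 2 (X_ne_zero i)) ?_⟩
  simp_rw [h, hG, Finset.mul_sum, mul_pow]

theorem exists_sum_sq_of_X_pow_mul_eq_sum_sq {i : σ} {p : MvPolynomial σ R} (N : ℕ)
    {H : ι → MvPolynomial σ R} (h : X i ^ (2 * N) * p = ∑ j, H j ^ 2) :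
    ∃ G : ι → MvPolynomial σ R, p = ∑ j, G j ^ 2 := by
  induction N generalizing H with
  | zero => exact ⟨H, by simpa using h⟩
  | succ N ih =>
    obtain ⟨G, hG⟩ :=
      exists_sum_sq_of_X_sq_mul_eq_sum_sq (p := X i ^ (2 * N) * p) (by rw [← h]; ring)
    exact ih hG

end MvPolynomial

theorem stubborn_times_even_power_general (n : ℕ) (F : MvPolynomial (Fin (n + 1)) ℝ)
    (hnonneg : ∀ x : Fin (n + 1) → ℝ, 0 ≤ eval x F)
    (hstub : ∀ k : ℕ, Odd k → 1 ≤ k →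
      ¬ ∃ (r : ℕ) (H : Fin r → MvPolynomial (Fin (n + 1)) ℝ), F ^ k = ∑ i, (H i) ^ 2)
    (m : ℕ) :
    (∀ x : Fin (n + 1) → ℝ, 0 ≤ eval x ((X 0 ^ (2 * m)) * F)) ∧
    ∀ k : ℕ, Odd k → 1 ≤ k →
      ¬ ∃ (r : ℕ) (H : Fin r → MvPolynomial (Fin (n + 1)) ℝ),
        ((X 0 ^ (2 * m)) * F) ^ k = ∑ i, (H i) ^ 2 := by
  refine ⟨fun x => ?_, fun k hodd hk ⟨r, H, hH⟩ => hstub k hodd hk ⟨r, ?_⟩⟩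
  · rw [eval_mul, eval_pow, eval_X]
    exact mul_nonneg ((even_two_mul m).pow_nonneg _) (hnonneg x)
  · refine exists_sum_sq_of_X_pow_mul_eq_sum_sq (i := 0) (H := H) (m * k) ?_
    rw [← hH, mul_pow, ← pow_mul, mul_assoc]

theorem stubborn_times_even_power (n : ℕ) (F : MvPolynomial (Fin (n + 1)) ℝ)
    (hnonneg : ∀ x : Fin (n + 1) → ℝ, 0 ≤ eval x F)
    (hstub : ∀ k : ℕ, Odd k → 1 ≤ k →
      ¬ ∃ (r : ℕ) (H : Fin r → MvPolynomial (Fin (n + 1)) ℝ), F ^ k = ∑ i, (H i) ^ 2)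
    (m : ℕ) (hm : 1 ≤ m) :
    (∀ x : Fin (n + 1) → ℝ, 0 ≤ eval x ((X 0 ^ (2 * m)) * F)) ∧
    ∀ k : ℕ, Odd k → 1 ≤ k →
      ¬ ∃ (r : ℕ) (H : Fin r → MvPolynomial (Fin (n + 1)) ℝ),
        ((X 0 ^ (2 * m)) * F) ^ k = ∑ i, (H i) ^ 2 :=
  stubborn_times_even_power_general n F hnonneg hstub m
end
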